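/- arXiv:2012.12897 — 7 statements merged into one kernel-verified Lean document; each statement's English description precedes it below -/
import Mathlib

section
/- For all real numbers m ≥ 3 and integers l₁, l₂, l₃ with 2 ≤ l₁ ≤ l₂ ≤ l₃, if l₁ + l₂ is even and it is not the case that l₁, l₂, l₃ all have the same parity, then (m-1)^{l₁}((-1)^{l₂+l₃} + (m-1)^{l₃-l₁}) + (-1)^{l₃}(m-2) ≥ 0. -/
/-! Since `l₁ + l₂` is even but the three lengths do not share a parity, `l₂ + l₃` is odd and
`l₁ < l₃`. With `x = m - 1 ≥ 1` the expression becomes `x ^ l₁ * (x ^ (l₃ - l₁) - 1) ± (x - 1)`,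
and already `x ^ (l₃ - l₁) - 1 ≥ x - 1` absorbs the sign term. -/

theorem sub_one_le_pow_mul_pow_sub_one {R : Type*} [CommRing R] [LinearOrder R]
    [IsStrictOrderedRing R] {x : R} (hx : 1 ≤ x) (a : ℕ) {k : ℕ} (hk : k ≠ 0) :
    x - 1 ≤ x ^ a * (x ^ k - 1) :=
  calc x - 1 ≤ x ^ k - 1 := sub_le_sub_right (le_self_pow₀ hx hk) 1
    _ ≤ x ^ a * (x ^ k - 1) :=
      le_mul_of_one_le_left (sub_nonneg.mpr (one_le_pow₀ hx)) (one_le_pow₀ hx)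

theorem neg_le_neg_one_pow_mul {R : Type*} [Ring R] [PartialOrder R] [IsOrderedRing R]
    {a : R} (ha : 0 ≤ a) (n : ℕ) : -a ≤ (-1) ^ n * a := by
  rcases neg_one_pow_eq_or R n with h | h <;> rw [h]
  · simpa using neg_le_self ha
  · simp

theorem stmt_0_general (m : ℝ) (hm : 3 ≤ m) (l₁ l₂ l₃ : ℕ)
    (h12 : l₁ ≤ l₂) (h23 : l₂ ≤ l₃)
    (heven : Even (l₁ + l₂))
    (hnotall : ¬(l₁ % 2 = l₂ % 2 ∧ l₂ % 2 = l₃ % 2)) :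
    0 ≤ (m - 1) ^ l₁ * ((-1 : ℝ) ^ (l₂ + l₃) + (m - 1) ^ (l₃ - l₁)) +
      (-1 : ℝ) ^ l₃ * (m - 2) := by
  have hpar : (l₁ + l₂) % 2 = 0 := Nat.even_iff.mp heven
  have hodd : Odd (l₂ + l₃) := Nat.odd_iff.mpr (by omega)
  have hgap : l₃ - l₁ ≠ 0 := by omega
  have hmain := sub_one_le_pow_mul_pow_sub_one (x := m - 1) (by linarith) l₁ hgap
  have hsign := neg_le_neg_one_pow_mul (a := m - 2) (by linarith) l₃
  rw [hodd.neg_one_pow]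
  linarith

theorem stmt_0 (m : ℝ) (hm : 3 ≤ m) (l₁ l₂ l₃ : ℕ)
    (h1 : 2 ≤ l₁) (h12 : l₁ ≤ l₂) (h23 : l₂ ≤ l₃)
    (heven : Even (l₁ + l₂))
    (hnotall : ¬(l₁ % 2 = l₂ % 2 ∧ l₂ % 2 = l₃ % 2)) :
    0 ≤ (m - 1) ^ l₁ * ((-1 : ℝ) ^ (l₂ + l₃) + (m - 1) ^ (l₃ - l₁)) +
      (-1 : ℝ) ^ l₃ * (m - 2) :=
  stmt_0_general m hm l₁ l₂ l₃ h12 h23 heven hnotall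
end

section
/- For all real numbers m ≥ 3 and integers l₁, l₂, l₃ with 2 ≤ l₁ ≤ l₂ ≤ l₃, if l₁ + l₃ is even and not all of l₁, l₂, l₃ have the same parity, then (-1)^{l₂+l₃}(m-1)^{l₁} + (m-1)^{l₂} + (-1)^{l₂}(m-2) ≥ m(m-2)² ≥ 0. -/
/-! Since `l₁ ≡ l₃ ≢ l₂ (mod 2)`, the sign `(-1)^(l₂+l₃)` is `-1` and `l₂ ≥ l₁ + 1`. With `x = m - 1 ≥ 1`
the left-hand side is then at least `x^(l₁+1) - x^l₁ - (x - 1) = (x - 1)(x^l₁ - 1) ≥ (x - 1)(x^2 - 1)`,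
which is `m(m-2)^2`. -/

section

variable {R : Type*} [Ring R] [LinearOrder R] [IsStrictOrderedRing R]

lemma neg_le_neg_one_pow_mul_s3 {c : R} (hc : 0 ≤ c) (n : ℕ) : -c ≤ (-1) ^ n * c := by
  simpa [abs_mul, abs_neg_one_pow, abs_of_nonneg hc] using neg_abs_le ((-1 : R) ^ n * c)

lemma pow_mul_sub_one_le_pow_sub_pow {x : R} (hx : 1 ≤ x) {a b : ℕ} (hab : a < b) :
    x ^ a * (x - 1) ≤ x ^ b - x ^ a := by
  rw [mul_sub, mul_one, ← pow_succ]
  exact sub_le_sub_right (pow_le_pow_right₀ hx hab) _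

end

lemma mul_sub_two_sq_le_pow_sub_pow {m : ℝ} (hm : 2 ≤ m) {a b : ℕ} (ha : 2 ≤ a) (hab : a < b) :
    m * (m - 2) ^ 2 ≤ (m - 1) ^ b - (m - 1) ^ a - (m - 2) := by
  have hx : 1 ≤ m - 1 := by linarith
  calc m * (m - 2) ^ 2 = (m - 2) * ((m - 1) ^ 2 - 1) := by ring
    _ ≤ (m - 2) * ((m - 1) ^ a - 1) := by gcongr
    _ = (m - 1) ^ a * (m - 1 - 1) - (m - 2) := by ring
    _ ≤ (m - 1) ^ b - (m - 1) ^ a - (m - 2) := by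
        linarith [pow_mul_sub_one_le_pow_sub_pow hx hab]

theorem stmt_3_general (m : ℝ) (hm : 3 ≤ m) (l₁ l₂ l₃ : ℕ)
    (h1 : 2 ≤ l₁) (h12 : l₁ ≤ l₂)
    (heven : Even (l₁ + l₃))
    (hnotall : ¬(l₁ % 2 = l₂ % 2 ∧ l₂ % 2 = l₃ % 2)) :
    m * (m - 2) ^ 2 ≤
      (-1 : ℝ) ^ (l₂ + l₃) * (m - 1) ^ l₁ + (m - 1) ^ l₂ + (-1 : ℝ) ^ l₂ * (m - 2) ∧
    (0 : ℝ) ≤ m * (m - 2) ^ 2 := by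
  rw [Nat.even_add, Nat.even_iff, Nat.even_iff] at heven
  have hodd : Odd (l₂ + l₃) := by rw [Nat.odd_iff]; omega
  have hlt : l₁ < l₂ := by omega
  have hm0 : (0 : ℝ) ≤ m := by linarith
  have hsign := neg_le_neg_one_pow_mul_s3 (show (0 : ℝ) ≤ m - 2 by linarith) l₂
  refine ⟨?_, by positivity⟩
  rw [hodd.neg_one_pow]
  linarith [mul_sub_two_sq_le_pow_sub_pow (m := m) (by linarith) h1 hlt]

theorem stmt_3 (m : ℝ) (hm : 3 ≤ m) (l₁ l₂ l₃ : ℕ)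
    (h1 : 2 ≤ l₁) (h12 : l₁ ≤ l₂) (h23 : l₂ ≤ l₃)
    (heven : Even (l₁ + l₃))
    (hnotall : ¬(l₁ % 2 = l₂ % 2 ∧ l₂ % 2 = l₃ % 2)) :
    m * (m - 2) ^ 2 ≤
      (-1 : ℝ) ^ (l₂ + l₃) * (m - 1) ^ l₁ + (m - 1) ^ l₂ + (-1 : ℝ) ^ l₂ * (m - 2) ∧
    (0 : ℝ) ≤ m * (m - 2) ^ 2 :=
  stmt_3_general m hm l₁ l₂ l₃ h1 h12 heven hnotall
end

section
/- Suppose G is a finite simple graph with an edge e = uv, and m ≥ 2 is an integer such that P(G−e, m) < (m/(m−1))·P(G, m), where P denotes the number of proper colorings with the given number of colors. Then the DP color function satisfies P_DP(G, m) < P(G, m), i.e., there exists an m-fold cover H of G such that the number of H-colorings of G is strictly less than P(G, m). -/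
/-- An `m`-fold cover of `G`, presented on the vertex set `V × Fin m` with lists
`L v = {v} × Fin m`: each list is a clique, cross-edges join only lists of
adjacent vertices of `G`, and the cross-edges between two lists form a matching. -/
structure IsDPCover {V : Type*} (G : SimpleGraph V) (m : ℕ)
    (H : SimpleGraph (V × Fin m)) : Prop where
  listClique : ∀ (v : V) (j j' : Fin m), j ≠ j' → H.Adj (v, j) (v, j')
  cross : ∀ (u v : V) (j j' : Fin m), u ≠ v → H.Adj (u, j) (v, j') → G.Adj u v
  matching₁ : ∀ (u v : V) (j j₁ j₂ : Fin m), u ≠ v →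
    H.Adj (u, j) (v, j₁) → H.Adj (u, j) (v, j₂) → j₁ = j₂
  matching₂ : ∀ (u v : V) (j₁ j₂ j : Fin m), u ≠ v →
    H.Adj (u, j₁) (v, j) → H.Adj (u, j₂) (v, j) → j₁ = j₂

/-- The number of `H`-colorings: independent transversals of the cover `H`,
recorded as functions picking one vertex from each list. -/
noncomputable def coverColorings {V : Type*} (m : ℕ) (H : SimpleGraph (V × Fin m)) : ℕ :=
  Nat.card {f : V → Fin m // ∀ u v : V, ¬ H.Adj (u, f u) (v, f v)}

/-- The DP color function `P_DP(G, m)`: the minimum number of `H`-colorings over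
all `m`-fold covers `H` of `G`. -/
noncomputable def dpColorFunction {V : Type*} (G : SimpleGraph V) (m : ℕ) : ℕ :=
  sInf {n | ∃ H : SimpleGraph (V × Fin m), IsDPCover G m H ∧ n = coverColorings m H}

/-!
Shift the identity matching on the edge `uv` by some `d ≠ 0`. The colorings of the resulting
cover are the proper colorings `f` of `G - e` with `f v ≠ f u + d`, so the cover has
`P(G - e, m) - N_d` colorings, where `N_d` counts the colorings of `G - e` with `f v - f u = d`.
The `N_d` with `d ≠ 0` add up to `P(G, m)`, so by pigeonhole some `N_d ≥ P(G, m) / (m - 1)`,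
and then `P(G - e, m) - N_d < (m / (m - 1)) P(G, m) - P(G, m) / (m - 1) = P(G, m)`.
-/

open Finset

lemma SimpleGraph.forall_adj_ne_iff_deleteEdges {V α : Type*} {G : SimpleGraph V} {u v : V}
    (he : G.Adj u v) (f : V → α) :
    (∀ x y : V, G.Adj x y → f x ≠ f y) ↔
      (∀ x y : V, (G.deleteEdges {s(u, v)}).Adj x y → f x ≠ f y) ∧ f u ≠ f v := by
  refine ⟨fun h => ⟨fun x y hxy => h x y (G.deleteEdges_le _ hxy), h u v he⟩, ?_⟩
  rintro ⟨hdel, huv⟩ x y hxy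
  by_cases hxy' : s(x, y) = s(u, v)
  · rcases Sym2.eq_iff.mp hxy' with ⟨rfl, rfl⟩ | ⟨rfl, rfl⟩
    exacts [huv, huv.symm]
  · exact hdel x y (SimpleGraph.deleteEdges_adj.mpr ⟨hxy, hxy'⟩)

section ShiftCover

variable {V : Type*} (G : SimpleGraph V) {m : ℕ}

/-- The cover in which an edge `xy` of `G` contributes the matching `(x, i) ~ (y, i + σ x y)`;
it is a DP-cover when `σ` is antisymmetric. -/
def shiftCover (σ : V → V → Fin m) : SimpleGraph (V × Fin m) :=
  SimpleGraph.fromRel fun p q => p.1 = q.1 ∨ (G.Adj p.1 q.1 ∧ q.2 = p.2 + σ p.1 q.1)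

variable {G} {σ : V → V → Fin m}

lemma shiftCover_adj_same (x : V) (i j : Fin m) :
    (shiftCover G σ).Adj (x, i) (x, j) ↔ i ≠ j := by
  simp [shiftCover]

variable [NeZero m]

lemma shiftCover_adj_of_ne (hσ : ∀ x y, σ y x = -σ x y) {x y : V} (hxy : x ≠ y)
    (i j : Fin m) : (shiftCover G σ).Adj (x, i) (y, j) ↔ G.Adj x y ∧ j = i + σ x y := by
  simp only [shiftCover, SimpleGraph.fromRel_adj, ne_eq, Prod.mk.injEq, hxy, hxy.symm,
    false_and, not_false_eq_true, false_or, true_and, hσ x y]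
  constructor
  · rintro (h | ⟨hadj, rfl⟩)
    · exact h
    · exact ⟨hadj.symm, by abel⟩
  · exact Or.inl

lemma shiftCover_isDPCover (hσ : ∀ x y, σ y x = -σ x y) :
    IsDPCover G m (shiftCover G σ) where
  listClique x _ _ := (shiftCover_adj_same x _ _).mpr
  cross _ _ _ _ hxy h := ((shiftCover_adj_of_ne hσ hxy _ _).mp h).1
  matching₁ _ _ _ _ _ hxy h₁ h₂ :=
    ((shiftCover_adj_of_ne hσ hxy _ _).mp h₁).2.trans ((shiftCover_adj_of_ne hσ hxy _ _).mp h₂).2.symm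
  matching₂ _ _ _ _ _ hxy h₁ h₂ := add_right_cancel
    (((shiftCover_adj_of_ne hσ hxy _ _).mp h₁).2.symm.trans ((shiftCover_adj_of_ne hσ hxy _ _).mp h₂).2)

lemma shiftCover_isColoring_iff (hσ : ∀ x y, σ y x = -σ x y) (f : V → Fin m) :
    (∀ x y : V, ¬ (shiftCover G σ).Adj (x, f x) (y, f y)) ↔
      ∀ x y : V, G.Adj x y → f y ≠ f x + σ x y := by
  refine ⟨fun h x y hxy hf => h x y ((shiftCover_adj_of_ne hσ hxy.ne _ _).mpr ⟨hxy, hf⟩), ?_⟩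
  intro h x y hadj
  by_cases hxy : x = y
  · subst hxy
    exact (shiftCover G σ).loopless.irrefl _ hadj
  · obtain ⟨hxy, hf⟩ := (shiftCover_adj_of_ne hσ hxy _ _).mp hadj
    exact h x y hxy hf

def edgeShift [DecidableEq V] (u v : V) (d : Fin m) (x y : V) : Fin m :=
  if x = u ∧ y = v then d else if x = v ∧ y = u then -d else 0

variable [DecidableEq V] {u v : V}

lemma edgeShift_swap (huv : u ≠ v) (d : Fin m) (x y : V) :
    edgeShift u v d y x = -edgeShift u v d x y := by
  unfold edgeShift
  split_ifs <;> simp_all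

lemma shiftCover_edgeShift_isColoring_iff (he : G.Adj u v) (d : Fin m) (f : V → Fin m) :
    (∀ x y : V, ¬ (shiftCover G (edgeShift u v d)).Adj (x, f x) (y, f y)) ↔
      (∀ x y : V, (G.deleteEdges {s(u, v)}).Adj x y → f x ≠ f y) ∧ f v ≠ f u + d := by
  rw [shiftCover_isColoring_iff (edgeShift_swap he.ne d)]
  constructor
  · intro h
    refine ⟨fun x y hxy hf => ?_, by simpa [edgeShift] using h u v he⟩
    obtain ⟨hadj, hne⟩ := SimpleGraph.deleteEdges_adj.mp hxy
    have hshift : edgeShift u v d x y = 0 := by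
      simp only [Set.mem_singleton_iff, Sym2.eq_iff, not_or] at hne
      simp [edgeShift, hne.1, hne.2]
    exact h x y hadj (by rw [hshift, add_zero, hf])
  · rintro ⟨hdel, huv⟩ x y hadj hf
    unfold edgeShift at hf
    split_ifs at hf with h₁ h₂
    · exact huv (h₁.1 ▸ h₁.2 ▸ hf)
    · obtain ⟨rfl, rfl⟩ := h₂
      exact huv (by rw [hf]; abel)
    · refine hdel x y (SimpleGraph.deleteEdges_adj.mpr ⟨hadj, ?_⟩) (by rw [hf, add_zero])
      simp only [Set.mem_singleton_iff, Sym2.eq_iff]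
      tauto

end ShiftCover

lemma exists_card_div_le_card_filter_eq_add {α : Type*} (s : Finset α) {m : ℕ} [NeZero m]
    (hm : 2 ≤ m) (a b : α → Fin m) :
    ∃ d ≠ 0, (#(s.filter fun x => a x ≠ b x) : ℚ) / (m - 1) ≤
      #(s.filter fun x => b x = a x + d) := by
  have hnonzero : #(univ.erase (0 : Fin m)) = m - 1 := by simp
  have hpos : (0 : ℚ) < m - 1 := sub_pos.mpr (by exact_mod_cast hm)
  obtain ⟨d, hd, hle⟩ := exists_le_card_fiber_of_nsmul_le_card_of_maps_to
    (s := s.filter fun x => a x ≠ b x) (t := univ.erase 0) (f := fun x => b x - a x)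
    (b := (#(s.filter fun x => a x ≠ b x) : ℚ) / (m - 1))
    (fun x hx => mem_erase.mpr ⟨sub_ne_zero.mpr (mem_filter.mp hx).2.symm, mem_univ _⟩)
    (card_pos.mp (by omega))
    (by rw [hnonzero, nsmul_eq_mul, Nat.cast_pred (by omega), mul_div_cancel₀ _ hpos.ne'])
  refine ⟨d, (mem_erase.mp hd).1, hle.trans ?_⟩
  exact_mod_cast card_le_card fun x hx => by
    simp only [mem_filter] at hx ⊢
    exact ⟨hx.1.1, eq_add_of_sub_eq' hx.2⟩

section ProperColorings

variable {V : Type*} [Fintype V] [DecidableEq V] (G : SimpleGraph V) (m : ℕ)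

open Classical in
noncomputable def properColorings : Finset (V → Fin m) :=
  univ.filter fun f => ∀ x y : V, G.Adj x y → f x ≠ f y

lemma card_properColorings :
    #(properColorings G m) = Nat.card {f : V → Fin m // ∀ x y : V, G.Adj x y → f x ≠ f y} := by
  classical
  rw [Nat.card_eq_fintype_card, Fintype.card_subtype, properColorings]

variable {G m} {u v : V}

lemma properColorings_deleteEdges_filter_ne (he : G.Adj u v) :
    (properColorings (G.deleteEdges {s(u, v)}) m).filter (fun f => f u ≠ f v) =
      properColorings G m := by
  ext f
  simp [properColorings, SimpleGraph.forall_adj_ne_iff_deleteEdges he f]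

lemma coverColorings_shiftCover_edgeShift [NeZero m] (he : G.Adj u v) (d : Fin m) :
    coverColorings m (shiftCover G (edgeShift u v d)) =
      #((properColorings (G.deleteEdges {s(u, v)}) m).filter fun f => f v ≠ f u + d) := by
  classical
  rw [coverColorings, Nat.card_eq_fintype_card, Fintype.card_subtype, properColorings,
    filter_filter]
  congr 1
  ext f
  simp [shiftCover_edgeShift_isColoring_iff he d f]

end ProperColorings

/-- Lemma 3.1: if `P(G-e, m) < (m/(m-1)) P(G, m)` for an edge `e = uv` and
`m ≥ 2`, then `P_DP(G, m) < P(G, m)`. -/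
theorem stmt_11 {V : Type*} [Fintype V] (G : SimpleGraph V) (u v : V)
    (he : G.Adj u v) (m : ℕ) (hm : 2 ≤ m)
    (hlt : (Nat.card {f : V → Fin m // ∀ x y : V,
        (G.deleteEdges {s(u, v)}).Adj x y → f x ≠ f y} : ℚ) <
      ((m : ℚ) / ((m : ℚ) - 1)) *
        (Nat.card {f : V → Fin m // ∀ x y : V, G.Adj x y → f x ≠ f y} : ℚ)) :
    dpColorFunction G m <
      Nat.card {f : V → Fin m // ∀ x y : V, G.Adj x y → f x ≠ f y} := by
  classical
  have : NeZero m := ⟨by omega⟩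
  simp only [← card_properColorings] at hlt ⊢
  rw [← properColorings_deleteEdges_filter_ne he] at hlt ⊢
  set s := properColorings (G.deleteEdges {s(u, v)}) m
  obtain ⟨d, -, hd⟩ := exists_card_div_le_card_filter_eq_add s hm (· u) (· v)
  have hsplit : (#(s.filter fun f => f v = f u + d) : ℚ) + #(s.filter fun f => f v ≠ f u + d) =
      #s := by
    exact_mod_cast card_filter_add_card_filter_not _
  have hm1 : (0 : ℚ) < m - 1 := sub_pos.mpr (by exact_mod_cast hm)
  have hfrac : (m : ℚ) / (m - 1) * #(s.filter fun f => f u ≠ f v) =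
      #(s.filter fun f => f u ≠ f v) + #(s.filter fun f => f u ≠ f v) / (m - 1) := by
    field_simp
    ring
  calc dpColorFunction G m ≤ coverColorings m (shiftCover G (edgeShift u v d)) :=
        Nat.sInf_le ⟨_, shiftCover_isDPCover (edgeShift_swap he.ne d), rfl⟩
    _ = #(s.filter fun f => f v ≠ f u + d) := coverColorings_shiftCover_edgeShift he d
    _ < #(s.filter fun f => f u ≠ f v) := by
        exact_mod_cast (by linarith : (#(s.filter fun f => f v ≠ f u + d) : ℚ) <
          #(s.filter fun f => f u ≠ f v))
end

section
/- Suppose H = (L,H) is an m-fold cover of a graph G with a canonical labeling, i.e., L(v) = {(v,j) : j ∈ [m]} and (u,j)(v,j) ∈ E(H) for all uv ∈ E(G), j ∈ [m]. For each i ∈ [m], let B_i = {(v,i) : v ∈ V(G)}. Then a set I ⊆ V(H) satisfies |I ∩ L(v)| = 1 for every v ∈ V(G) and H[I] is isomorphic to G if and only if I = B_j for some j ∈ [m]. -/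
theorem SimpleGraph.Reachable.eq_of_forall_adj {W β : Type*} {K : SimpleGraph W} {f : W → β}
    (hf : ∀ x y, K.Adj x y → f x = f y) {a b : W} (h : K.Reachable a b) : f a = f b := by
  obtain ⟨w⟩ := h
  induction w with
  | nil => rfl
  | cons hadj _ ih => exact (hf _ _ hadj).trans ih

theorem exists_eq_setOf_snd_eq {α β : Type*} [Nonempty α] {I : Set (α × β)}
    (hI : ∀ a, ∃ b, (a, b) ∈ I) (hsnd : ∀ p ∈ I, ∀ q ∈ I, p.2 = q.2) :
    ∃ b, I = {p | p.2 = b} := by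
  obtain ⟨b₀, h₀⟩ := hI (Classical.arbitrary α)
  refine ⟨b₀, Set.ext fun ⟨a, b⟩ => ⟨fun h => hsnd _ h _ h₀, ?_⟩⟩
  intro (hb : b = b₀)
  obtain ⟨b', h'⟩ := hI a
  have hb' : b' = b₀ := hsnd _ h' _ h₀
  rwa [hb, ← hb']

def HasCanonicalLabeling {V : Type*} (G : SimpleGraph V) {m : ℕ}
    (H : SimpleGraph (V × Fin m)) : Prop :=
  ∀ u v : V, G.Adj u v → ∀ j : Fin m, H.Adj (u, j) (v, j)

namespace IsDPCover

variable {V : Type*} {G : SimpleGraph V} {m : ℕ} {H : SimpleGraph (V × Fin m)}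

/-- The canonical edge `(u, i)(v, i)` already matches `(u, i)` into `L v`. -/
theorem snd_eq_of_adj (hH : IsDPCover G m H) (hcan : HasCanonicalLabeling G H)
    {u v : V} {i j : Fin m} (huv : u ≠ v) (h : H.Adj (u, i) (v, j)) : i = j :=
  hH.matching₁ u v i i j huv (hcan u v (hH.cross u v i j huv h) i) h

theorem adj_layer_iff (hH : IsDPCover G m H) (hcan : HasCanonicalLabeling G H)
    {u v : V} {j : Fin m} : H.Adj (u, j) (v, j) ↔ G.Adj u v :=
  ⟨fun h => hH.cross u v j j (fun huv => H.ne_of_adj h (huv ▸ rfl)) h, fun h => hcan u v h j⟩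

theorem snd_eq_of_induce_adj (hH : IsDPCover G m H) (hcan : HasCanonicalLabeling G H)
    {I : Set (V × Fin m)} (hI : ∀ v, ∃! j, (v, j) ∈ I) {a b : I}
    (h : (H.induce I).Adj a b) : a.1.2 = b.1.2 := by
  obtain ⟨⟨u, i⟩, hu⟩ := a
  obtain ⟨⟨v, j⟩, hv⟩ := b
  by_cases huv : u = v
  · subst huv
    exact (hI u).unique hu hv
  · exact hH.snd_eq_of_adj hcan huv h

def layerIso (hH : IsDPCover G m H) (hcan : HasCanonicalLabeling G H) (j : Fin m) :
    H.induce {p | p.2 = j} ≃g G where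
  toFun p := p.1.1
  invFun v := ⟨(v, j), rfl⟩
  left_inv := by
    rintro ⟨⟨v, i⟩, hi : i = j⟩
    subst hi
    rfl
  right_inv _ := rfl
  map_rel_iff' := by
    rintro ⟨⟨u, i⟩, hi : i = j⟩ ⟨⟨v, k⟩, hk : k = j⟩
    subst hi hk
    exact (hH.adj_layer_iff hcan).symm

end IsDPCover

theorem stmt_13_general {V : Type*} (G : SimpleGraph V) (hG : G.Connected)
    (m : ℕ) (H : SimpleGraph (V × Fin m)) (hH : IsDPCover G m H)
    (hcan : ∀ u v : V, G.Adj u v → ∀ j : Fin m, H.Adj (u, j) (v, j))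
    (I : Set (V × Fin m)) :
    ((∀ v : V, ∃! j : Fin m, (v, j) ∈ I) ∧
        Nonempty (SimpleGraph.induce I H ≃g G)) ↔
      ∃ j : Fin m, I = {p : V × Fin m | p.2 = j} := by
  constructor
  · rintro ⟨hI, ⟨φ⟩⟩
    have : Nonempty V := hG.nonempty
    have hconn : (H.induce I).Connected := φ.connected_iff.mpr hG
    refine exists_eq_setOf_snd_eq (fun v => (hI v).exists) fun p hp q hq => ?_
    exact (hconn.preconnected ⟨p, hp⟩ ⟨q, hq⟩).eq_of_forall_adj (f := fun a => a.1.2)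
      fun _ _ => hH.snd_eq_of_induce_adj hcan hI
  · rintro ⟨j, rfl⟩
    exact ⟨fun v => ⟨j, rfl, fun _ h => h⟩, ⟨hH.layerIso hcan j⟩⟩

/-- Proposition 3.5: if an `m`-fold cover of a connected graph `G` has a
canonical labeling, then a transversal set `I` induces a subgraph isomorphic to
`G` if and only if `I` is one of the canonical layers `B j`. -/
theorem stmt_13 {V : Type*} [Fintype V] (G : SimpleGraph V) (hG : G.Connected)
    (m : ℕ) (H : SimpleGraph (V × Fin m)) (hH : IsDPCover G m H)
    (hcan : ∀ u v : V, G.Adj u v → ∀ j : Fin m, H.Adj (u, j) (v, j))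
    (I : Set (V × Fin m)) :
    ((∀ v : V, ∃! j : Fin m, (v, j) ∈ I) ∧
        Nonempty (SimpleGraph.induce I H ≃g G)) ↔
      ∃ j : Fin m, I = {p : V × Fin m | p.2 = j} :=
  stmt_13_general G hG m H hH hcan I
end

section
/- Let G be a graph and H = (L,H) an m-fold cover of G. Let e_{i₁},…,e_{i_p} be edges of G and let c be the number of components of the spanning subgraph of G with edge set {e_{i₁},…,e_{i_p}}. Let S_{i_j} be the set of transversals I ⊆ V(H) (with |I ∩ L(v)| = 1 for all v) such that H[I] contains an edge of E_H(L(y),L(z)) where e_{i_j} = yz. Then |S_{i₁} ∩ ⋯ ∩ S_{i_p}| ≤ m^c. -/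
/-!
Two transversals realizing every edge of `G'` that agree at one vertex agree on its whole
component: across an edge `uw` the cross-edges between `L(u)` and `L(w)` form a matching, so
the choice in `L(u)` forces the choice in `L(w)`. Hence such a transversal is determined by its
values at one representative per component, which leaves at most `m ^ c` possibilities.
-/

namespace IsDPCover

variable {V : Type*} {G : SimpleGraph V} {m : ℕ} {H : SimpleGraph (V × Fin m)}

theorem eq_of_adj_of_eq (hH : IsDPCover G m H) {G' : SimpleGraph V} {f g : V → Fin m}
    (hf : ∀ u v, G'.Adj u v → H.Adj (u, f u) (v, f v))
    (hg : ∀ u v, G'.Adj u v → H.Adj (u, g u) (v, g v))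
    {u w : V} (huw : G'.Adj u w) (hu : f u = g u) : f w = g w :=
  hH.matching₁ u w (f u) (f w) (g w) huw.ne (hf u w huw) (hu ▸ hg u w huw)

theorem eq_of_reachable_of_eq (hH : IsDPCover G m H) {G' : SimpleGraph V} {f g : V → Fin m}
    (hf : ∀ u v, G'.Adj u v → H.Adj (u, f u) (v, f v))
    (hg : ∀ u v, G'.Adj u v → H.Adj (u, g u) (v, g v))
    {u w : V} (huw : G'.Reachable u w) (hu : f u = g u) : f w = g w := by
  obtain ⟨p⟩ := huw
  induction p with
  | nil => exact hu
  | cons hadj _ ih => exact ih (hH.eq_of_adj_of_eq hf hg hadj hu)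

theorem injective_restrict_out (hH : IsDPCover G m H) (G' : SimpleGraph V) :
    Function.Injective
      (fun f : {f : V → Fin m // ∀ u v, G'.Adj u v → H.Adj (u, f u) (v, f v)} =>
        fun c : G'.ConnectedComponent => f.1 c.out) := by
  rintro ⟨f, hf⟩ ⟨g, hg⟩ hfg
  refine Subtype.ext (funext fun v => ?_)
  have hrep : G'.Reachable (G'.connectedComponentMk v).out v :=
    SimpleGraph.ConnectedComponent.exact (G'.connectedComponentMk v).out_eq
  exact hH.eq_of_reachable_of_eq hf hg hrep (congrFun hfg (G'.connectedComponentMk v))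

end IsDPCover

theorem stmt_14_general {V : Type*} [Fintype V] (G : SimpleGraph V) (m : ℕ)
    (H : SimpleGraph (V × Fin m)) (hH : IsDPCover G m H)
    (G' : SimpleGraph V) :
    Nat.card {f : V → Fin m // ∀ u v : V, G'.Adj u v → H.Adj (u, f u) (v, f v)} ≤
      m ^ Nat.card G'.ConnectedComponent := by
  calc Nat.card {f : V → Fin m // ∀ u v : V, G'.Adj u v → H.Adj (u, f u) (v, f v)}
      ≤ Nat.card (G'.ConnectedComponent → Fin m) :=
        Nat.card_le_card_of_injective _ (hH.injective_restrict_out G')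
    _ = m ^ Nat.card G'.ConnectedComponent := by rw [Nat.card_fun, Nat.card_fin]

/-- The counting inequality of Lemma 3.6: the number of transversals of a cover
realizing every chosen edge of a spanning subgraph `G'` of `G` is at most
`m ^ c`, where `c` is the number of connected components of `G'`. -/
theorem stmt_14 {V : Type*} [Fintype V] (G : SimpleGraph V) (m : ℕ)
    (H : SimpleGraph (V × Fin m)) (hH : IsDPCover G m H)
    (G' : SimpleGraph V) (hG' : G' ≤ G) :
    Nat.card {f : V → Fin m // ∀ u v : V, G'.Adj u v → H.Adj (u, f u) (v, f v)} ≤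
      m ^ Nat.card G'.ConnectedComponent :=
  stmt_14_general G m H hH G'
end

section
/- Let G = Θ(l₁,…,l_k) be a generalized theta graph with k ≥ 2, l₂ ≤ ⋯ ≤ l_k, l₂ ≥ max{l₁, 2}, and suppose l₁ has parity different from l_j for every j ∈ {2,…,k}. Then there exists N ∈ ℕ such that P_DP(G, m) = P(G, m) for all m ≥ N. -/
/-- Vertex type of the generalized theta graph: two end vertices plus, for
each path `i`, `l i - 1` internal vertices. -/
abbrev ThetaVertexType (k : ℕ) (l : Fin k → ℕ) : Type :=
  Fin 2 ⊕ (Σ i : Fin k, Fin (l i - 1))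

/-- The `j`-th vertex along the `i`-th path of the generalized theta graph
(`j = 0` is the end vertex `u`, `j = l i` is the end vertex `w`). -/
def thetaVert (k : ℕ) (l : Fin k → ℕ) (i : Fin k) (j : ℕ) : ThetaVertexType k l :=
  if hj : j = 0 then Sum.inl 0
  else if h : j < l i then Sum.inr ⟨i, ⟨j - 1, by omega⟩⟩
  else Sum.inl 1

/-- The generalized theta graph `Θ(l 0, …, l (k-1))`: two end vertices joined by
`k` internally disjoint paths, the `i`-th of which has `l i` edges. -/
def thetaGraph (k : ℕ) (l : Fin k → ℕ) : SimpleGraph (ThetaVertexType k l) :=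
  SimpleGraph.fromEdgeSet
    {e | ∃ (i : Fin k) (j : ℕ), j < l i ∧ e = s(thetaVert k l i j, thetaVert k l i (j + 1))}

/-- Number of proper colorings of `G` with `m` colors. -/
noncomputable def properCount {V : Type*} (G : SimpleGraph V) (m : ℕ) : ℕ :=
  Nat.card {f : V → Fin m // ∀ u v : V, G.Adj u v → f u ≠ f v}


/-!
A DP-cover of a theta graph can be enlarged, edge by edge, to one whose cross-edges are full
perfect matchings, i.e. permutations `τ`; this only removes colorings. Once the colors `a`, `b`
of the two end vertices are fixed, the paths are colored independently, and a path of length `n`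
has `pathSame m n` or `pathDiff m n` colorings according to whether the composite permutation
along it sends `a` to `b`. Summing over `b`, the count for `a` depends only on how the paths are
grouped by the image `π i` of `a`; the chromatic polynomial is the case of a single group.

Since `pathSame m n - pathDiff m n = (-1) ^ n`, the parity hypothesis makes the factor of the
shortest path deviate from `pathDiff` in the direction opposite to all other paths, while for
large `m` the other paths deviate only by a negligible relative amount. By the rearrangement
inequality, merging any group into the group of the shortest path therefore never increases the
count, so the trivial cover is a minimiser.
-/

namespace ThetaDP

open Finset

/-- `pathCounts m n = (s, d)`: among the proper `m`-colorings of a path with `n` edges whose two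
end colors are prescribed, `s` counts those with equal end colors and `d` those with distinct ones
(extending by one edge gives the recursion). -/
def pathCounts (m : ℕ) : ℕ → ℕ × ℕ
  | 0 => (1, 0)
  | n + 1 => ((m - 1) * (pathCounts m n).2, (pathCounts m n).1 + (m - 2) * (pathCounts m n).2)

def pathSame (m n : ℕ) : ℕ := (pathCounts m n).1

def pathDiff (m n : ℕ) : ℕ := (pathCounts m n).2

@[simp] lemma pathSame_zero (m : ℕ) : pathSame m 0 = 1 := rfl

@[simp] lemma pathDiff_zero (m : ℕ) : pathDiff m 0 = 0 := rfl

lemma pathSame_succ (m n : ℕ) : pathSame m (n + 1) = (m - 1) * pathDiff m n := rfl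

lemma pathDiff_succ (m n : ℕ) : pathDiff m (n + 1) = pathSame m n + (m - 2) * pathDiff m n := rfl

lemma pathSame_sub_pathDiff {m : ℕ} (hm : 2 ≤ m) (n : ℕ) :
    (pathSame m n : ℤ) - pathDiff m n = (-1) ^ n := by
  induction n with
  | zero => rfl
  | succ n ih =>
    rw [pathSame_succ, pathDiff_succ, pow_succ, ← ih]
    push_cast [Nat.cast_sub (by omega : 1 ≤ m), Nat.cast_sub hm]
    ring

lemma pathSame_eq_of_even {m n : ℕ} (hm : 2 ≤ m) (hn : Even n) :
    pathSame m n = pathDiff m n + 1 := by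
  have := pathSame_sub_pathDiff hm n
  rw [hn.neg_one_pow] at this
  omega

lemma pathDiff_eq_of_odd {m n : ℕ} (hm : 2 ≤ m) (hn : Odd n) :
    pathDiff m n = pathSame m n + 1 := by
  have := pathSame_sub_pathDiff hm n
  rw [hn.neg_one_pow] at this
  omega

lemma mul_pathDiff_le_pathDiff_succ (m n : ℕ) : (m - 2) * pathDiff m n ≤ pathDiff m (n + 1) :=
  Nat.le_add_left _ _

lemma pathDiff_monotone {m : ℕ} (hm : 3 ≤ m) : Monotone (pathDiff m) :=
  monotone_nat_of_le_succ fun n =>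
    (Nat.le_mul_of_pos_left _ (by omega)).trans (mul_pathDiff_le_pathDiff_succ m n)

lemma one_le_pathDiff {m n : ℕ} (hm : 3 ≤ m) (hn : 1 ≤ n) : 1 ≤ pathDiff m n :=
  pathDiff_monotone hm hn

lemma mul_pathDiff_le_pathDiff_of_lt {m n n' : ℕ} (hm : 3 ≤ m) (hnn' : n < n') :
    (m - 2) * pathDiff m n ≤ pathDiff m n' :=
  (mul_pathDiff_le_pathDiff_succ m n).trans (pathDiff_monotone hm hnn')

lemma mul_prod_add_one_add_prod_le {ι : Type*} (s : Finset ι) (r : ι → ℕ) {c : ℕ} (hc : 1 ≤ c)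
    (hr : ∀ j ∈ s, c ≤ r j) :
    c * ∏ j ∈ s, (r j + 1) + ∏ j ∈ s, r j ≤ (c + 2 ^ s.card) * ∏ j ∈ s, r j := by
  classical
  induction s using Finset.induction_on with
  | empty => simp
  | insert j s hj ih =>
    rw [prod_insert hj, prod_insert hj, card_insert_of_notMem hj, pow_succ]
    have ih := ih fun i hi => hr i (mem_insert_of_mem hi)
    have hrj : c ≤ r j := hr j (mem_insert_self j s)
    have hpow : 1 ≤ 2 ^ s.card := Nat.one_le_two_pow
    have key : c + 2 ^ s.card ≤ r j * 2 ^ s.card + 1 := by nlinarith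
    nlinarith [Nat.mul_le_mul_left (r j + 1) ih, Nat.mul_le_mul_right (∏ i ∈ s, r i) key]

lemma sum_le_sum_of_eq_off_pair {α : Type*} [Fintype α] [DecidableEq α] {f g : α → ℕ} {u v : α}
    (huv : u ≠ v) (hpair : f u + f v ≤ g u + g v) (hrest : ∀ b, b ≠ u → b ≠ v → f b = g b) :
    ∑ b, f b ≤ ∑ b, g b := by
  rw [← sum_add_sum_compl {u, v} f, ← sum_add_sum_compl {u, v} g, sum_pair huv, sum_pair huv,
    sum_congr rfl fun b hb => hrest b (by simp_all) (by simp_all)]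
  exact Nat.add_le_add_right hpair _

section Rearrangement

variable {ι : Type*} [Fintype ι]

/-- `x` and `y` differ by one everywhere, the sign of `y - x` at `i₀` is opposite to its sign
elsewhere, and the bound makes the deviations away from `i₀` relatively negligible. -/
def SignFlipAt (x y : ι → ℕ) (i₀ : ι) : Prop :=
  y i₀ = x i₀ + 1 ∧ ∀ j ≠ i₀, x j = y j + 1 ∧ x i₀ * 2 ^ Fintype.card ι ≤ y j

lemma prod_le_prod_of_signFlipAt [DecidableEq ι] {x y : ι → ℕ} {i₀ : ι} (h : SignFlipAt x y i₀)
    {s : Finset ι} (hs : i₀ ∈ s) : ∏ i ∈ s, x i ≤ ∏ i ∈ s, y i := by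
  obtain ⟨h₀, hj⟩ := h
  have hB : ∀ j ∈ s.erase i₀, j ≠ i₀ := fun j hjB => ne_of_mem_erase hjB
  rw [← mul_prod_erase s x hs, ← mul_prod_erase s y hs, h₀,
    prod_congr rfl fun j hjB => (hj j (hB j hjB)).1]
  set B := s.erase i₀
  rcases Nat.eq_zero_or_pos (x i₀) with h0 | hpos
  · simp [h0]
  set K := 2 ^ Fintype.card ι
  have hBK : 2 ^ B.card ≤ K := Nat.pow_le_pow_right (by norm_num) (card_le_univ B)
  have hc : 1 ≤ x i₀ * K := Nat.mul_le_mul hpos Nat.one_le_two_pow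
  have hmain := mul_prod_add_one_add_prod_le B y hc fun j hjB => (hj j (hB j hjB)).2
  refine Nat.le_of_mul_le_mul_right (c := K) ?_ (by positivity)
  have hR := Nat.mul_le_mul_right (∏ j ∈ B, y j) hBK
  generalize ∏ j ∈ B, (y j + 1) = A at *
  generalize ∏ j ∈ B, y j = R at *
  linarith

lemma prod_le_prod_of_signFlipAt_of_notMem {x y : ι → ℕ} {i₀ : ι} (h : SignFlipAt x y i₀)
    {s : Finset ι} (hs : i₀ ∉ s) : ∏ i ∈ s, y i ≤ ∏ i ∈ s, x i :=
  prod_le_prod' fun j hj => ((h.2 j (ne_of_mem_of_not_mem hj hs)).1).ge.trans' (Nat.le_succ _)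

theorem signFlipAt_pathCounts {l : ι → ℕ} {i₀ : ι} {m : ℕ}
    (hm : 2 ^ Fintype.card ι + 3 ≤ m) (h₀ : 1 ≤ l i₀) (hlt : ∀ j ≠ i₀, l i₀ < l j)
    (hpar : ∀ j ≠ i₀, l i₀ % 2 ≠ l j % 2) :
    SignFlipAt (fun i => pathSame m (l i)) (fun i => pathDiff m (l i)) i₀ ∨
      SignFlipAt (fun i => pathDiff m (l i)) (fun i => pathSame m (l i)) i₀ := by
  have hpow : 1 ≤ 2 ^ Fintype.card ι := Nat.one_le_two_pow
  have hm2 : 2 ≤ m := by omega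
  have hpos := one_le_pathDiff (m := m) (by omega) h₀
  have hgrow (j : ι) (hj : j ≠ i₀) :
      (2 ^ Fintype.card ι + 1) * pathDiff m (l i₀) ≤ pathDiff m (l j) :=
    (Nat.mul_le_mul_right _ (by omega)).trans (mul_pathDiff_le_pathDiff_of_lt (by omega) (hlt j hj))
  rcases Nat.even_or_odd (l i₀) with h | h
  · have hodd (j : ι) (hj : j ≠ i₀) : Odd (l j) :=
      Nat.odd_iff.mpr (by have := hpar j hj; have := Nat.even_iff.mp h; omega)
    refine .inr ⟨pathSame_eq_of_even hm2 h, fun j hj => ⟨pathDiff_eq_of_odd hm2 (hodd j hj), ?_⟩⟩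
    linarith [hgrow j hj, pathDiff_eq_of_odd hm2 (hodd j hj)]
  · have heven (j : ι) (hj : j ≠ i₀) : Even (l j) :=
      Nat.even_iff.mpr (by have := hpar j hj; have := Nat.odd_iff.mp h; omega)
    refine .inl ⟨pathDiff_eq_of_odd hm2 h, fun j hj => ⟨pathSame_eq_of_even hm2 (heven j hj), ?_⟩⟩
    have hle : pathSame m (l i₀) ≤ pathDiff m (l i₀) := by
      rw [pathDiff_eq_of_odd hm2 h]
      exact Nat.le_succ _
    linarith [hgrow j hj, Nat.mul_le_mul_right (2 ^ Fintype.card ι) hle]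

variable [DecidableEq ι]

def classWeight (p q : ι → ℕ) (S : Finset ι) : ℕ := ∏ i, if i ∈ S then p i else q i

lemma classWeight_union_add_le (p q : ι → ℕ) {A B : Finset ι} (hAB : Disjoint A B)
    (hle : (∏ i ∈ A, p i ≤ ∏ i ∈ A, q i ∧ ∏ i ∈ B, q i ≤ ∏ i ∈ B, p i) ∨
      (∏ i ∈ A, q i ≤ ∏ i ∈ A, p i ∧ ∏ i ∈ B, p i ≤ ∏ i ∈ B, q i)) :
    classWeight p q (A ∪ B) + classWeight p q ∅ ≤ classWeight p q A + classWeight p q B := by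
  have split (g : ι → ℕ) :
      ∏ i, g i = (∏ i ∈ A, g i) * (∏ i ∈ B, g i) * ∏ i ∈ (A ∪ B)ᶜ, g i := by
    rw [← prod_union hAB, prod_mul_prod_compl]
  have hA : ∀ i ∈ A, i ∉ B := fun i hi => disjoint_left.mp hAB hi
  have hB : ∀ i ∈ B, i ∉ A := fun i hi => disjoint_right.mp hAB hi
  simp (disch := simp_all) only [classWeight, split, prod_ite_of_true, prod_ite_of_false]
  rw [← add_mul, ← add_mul]
  refine Nat.mul_le_mul_right _ ?_
  rcases hle with ⟨h₁, h₂⟩ | ⟨h₁, h₂⟩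
  · exact mul_add_mul_le_mul_add_mul h₁ h₂
  · linarith [mul_add_mul_le_mul_add_mul h₁ h₂]

variable {α : Type*} [Fintype α] [DecidableEq α]

/-- With `p`, `q` the path counts and `π i` a color of one end vertex transported along path `i`,
this counts the colorings with that end color: each color `b` of the other end vertex makes path
`i` contribute `p i` if `π i = b` and `q i` otherwise. -/
def twistedSum (p q : ι → ℕ) (π : ι → α) : ℕ := ∑ b, classWeight p q {i | π i = b}

lemma twistedSum_perm_comp (p q : ι → ℕ) (π : ι → α) (e : Equiv.Perm α) :
    twistedSum p q (e ∘ π) = twistedSum p q π := by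
  rw [twistedSum, ← Equiv.sum_comp e]
  simp [twistedSum]

lemma twistedSum_merge_le (p q : ι → ℕ) {i₀ : ι}
    (hflip : SignFlipAt p q i₀ ∨ SignFlipAt q p i₀) {π : ι → α} {u v : α} (hu : π i₀ = u)
    (hv : v ≠ u) :
    twistedSum p q (fun i => if π i = v then u else π i) ≤ twistedSum p q π := by
  refine sum_le_sum_of_eq_off_pair hv.symm ?_ fun b hbu hbv => ?_
  · beta_reduce
    have hunion : ({i | (if π i = v then u else π i) = u} : Finset ι) =
        ({i | π i = u} : Finset ι) ∪ ({i | π i = v} : Finset ι) := by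
      ext i; by_cases h : π i = v <;> simp [h]
    have hempty : ({i | (if π i = v then u else π i) = v} : Finset ι) = ∅ := by
      ext i; by_cases h : π i = v <;> simp [h, hv.symm]
    rw [hunion, hempty]
    refine classWeight_union_add_le p q ?_ ?_
    · exact disjoint_filter.mpr fun i _ h h' => hv (h' ▸ h)
    · have hA : i₀ ∈ ({i | π i = u} : Finset ι) := by simpa using hu
      have hB : i₀ ∉ ({i | π i = v} : Finset ι) := by simpa [hu] using hv.symm
      rcases hflip with h | h
      · exact Or.inl ⟨prod_le_prod_of_signFlipAt h hA, prod_le_prod_of_signFlipAt_of_notMem h hB⟩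
      · exact Or.inr ⟨prod_le_prod_of_signFlipAt h hA, prod_le_prod_of_signFlipAt_of_notMem h hB⟩
  · congr 1
    ext i; by_cases h : π i = v <;> simp [h, hbu.symm, hbv.symm]

theorem twistedSum_const_le (p q : ι → ℕ) {i₀ : ι}
    (hflip : SignFlipAt p q i₀ ∨ SignFlipAt q p i₀) (π : ι → α) (u : α) :
    twistedSum p q (fun _ => u) ≤ twistedSum p q π := by
  have hmerge (T : Finset α) :
      twistedSum p q (fun i => if π i ∈ T then π i₀ else π i) ≤ twistedSum p q π := by
    induction T using Finset.induction_on with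
    | empty => simp
    | insert v T hvT ih =>
      refine le_trans ?_ ih
      by_cases hv : v = π i₀
      · refine le_of_eq (congrArg _ (funext fun i => ?_))
        by_cases h : π i = v <;> simp [h, ← hv]
      · refine le_of_eq (congrArg _ (funext fun i => ?_)) |>.trans <|
          twistedSum_merge_le p q hflip (π := fun i => if π i ∈ T then π i₀ else π i) (by simp) hv
        split_ifs <;> simp_all
  calc twistedSum p q (fun _ => u)
      = twistedSum p q (Equiv.swap (π i₀) u ∘ fun _ => π i₀) := by simp [Function.comp_def]
    _ = twistedSum p q (fun _ => π i₀) := twistedSum_perm_comp p q _ _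
    _ = twistedSum p q (fun i => if π i ∈ univ then π i₀ else π i) := by simp
    _ ≤ twistedSum p q π := hmerge univ

end Rearrangement

section TwistedPath

variable {α : Type*}

/-- `twistComp τ n = τ (n - 1) * ⋯ * τ 1 * τ 0`. -/
def twistComp (τ : ℕ → Equiv.Perm α) : ℕ → Equiv.Perm α
  | 0 => 1
  | n + 1 => twistComp (fun j => τ (j + 1)) n * τ 0

@[simp] lemma twistComp_zero (τ : ℕ → Equiv.Perm α) : twistComp τ 0 = 1 := rfl

lemma twistComp_succ (τ : ℕ → Equiv.Perm α) (n : ℕ) :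
    twistComp τ (n + 1) = twistComp (fun j => τ (j + 1)) n * τ 0 := rfl

/-- The colors along a path with `t` internal vertices: `a` at position `0`, `g` at positions
`1, …, t` and `b` from position `t + 1` on. -/
def pathColor {t : ℕ} (a b : α) (g : Fin t → α) (j : ℕ) : α :=
  if j = 0 then a else if h : j - 1 < t then g ⟨j - 1, h⟩ else b

/-- `g` colors the internal vertices of a path of length `t + 1` with end colors `a` and `b`
independently in the cover whose cross-edges between positions `j` and `j + 1` are the graph
of `τ j`. -/
def IsTwistedPath {t : ℕ} (τ : ℕ → Equiv.Perm α) (a b : α) (g : Fin t → α) : Prop :=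
  ∀ j ≤ t, pathColor a b g (j + 1) ≠ τ j (pathColor a b g j)

@[simp] lemma pathColor_zero {t : ℕ} (a b : α) (g : Fin t → α) : pathColor a b g 0 = a := rfl

lemma pathColor_cons_succ {t : ℕ} (a b x : α) (g : Fin t → α) (j : ℕ) :
    pathColor a b (Fin.cons x g : Fin (t + 1) → α) (j + 1) = pathColor x b g j := by
  rcases j with _ | j
  · simp [pathColor]
  · by_cases h : j < t
    · simp [pathColor, h]
      rfl
    · simp [pathColor, h]

lemma isTwistedPath_cons {t : ℕ} (τ : ℕ → Equiv.Perm α) (a b x : α) (g : Fin t → α) :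
    IsTwistedPath τ a b (Fin.cons x g : Fin (t + 1) → α) ↔
      x ≠ τ 0 a ∧ IsTwistedPath (fun j => τ (j + 1)) x b g := by
  simp only [IsTwistedPath, pathColor_cons_succ]
  constructor
  · intro h
    exact ⟨by simpa using h 0 (Nat.zero_le _), fun j hj => by
      simpa [pathColor_cons_succ] using h (j + 1) (by omega)⟩
  · rintro ⟨h0, h⟩ (_ | j) hj
    · simpa using h0
    · simpa [pathColor_cons_succ] using h j (by omega)

lemma isTwistedPath_zero (τ : ℕ → Equiv.Perm α) (a b : α) (g : Fin 0 → α) :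
    IsTwistedPath τ a b g ↔ b ≠ τ 0 a := by
  simp [IsTwistedPath, pathColor]

@[simp] lemma twistComp_one (n : ℕ) : twistComp (fun _ => (1 : Equiv.Perm α)) n = 1 := by
  induction n with
  | zero => rfl
  | succ n ih => rw [twistComp_succ, ih, mul_one]

end TwistedPath

lemma sum_ite_eq_zero_ite_eq {m : ℕ} (c b : Fin m) (S D : ℕ) :
    ∑ x, (if x = c then 0 else if x = b then S else D) =
      if c = b then (m - 1) * D else S + (m - 2) * D := by
  rw [Fintype.sum_eq_add_sum_compl c, if_pos rfl, zero_add,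
    sum_congr rfl fun x hx => if_neg (by simpa using hx)]
  split_ifs with hcb
  · subst hcb
    rw [sum_congr rfl fun x hx => if_neg (by simpa using hx), sum_const, card_compl]
    simp
  · have hb : b ∈ ({c}ᶜ : Finset (Fin m)) := by simpa using Ne.symm hcb
    rw [← add_sum_erase _ _ hb, if_pos rfl,
      sum_congr rfl fun x hx => if_neg (ne_of_mem_erase hx), sum_const, card_erase_of_mem hb,
      card_compl]
    simp [Nat.sub_sub]

theorem card_isTwistedPath {m : ℕ} (t : ℕ) (τ : ℕ → Equiv.Perm (Fin m)) (a b : Fin m) :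
    Nat.card {g : Fin t → Fin m // IsTwistedPath τ a b g} =
      if twistComp τ (t + 1) a = b then pathSame m (t + 1) else pathDiff m (t + 1) := by
  induction t generalizing τ a with
  | zero =>
    simp_rw [isTwistedPath_zero, twistComp_succ, twistComp_zero, one_mul]
    split_ifs with h
    · simp [h, pathSame_succ]
    · simp [Ne.symm h, pathDiff_succ]
  | succ t ih =>
    set ρ := twistComp (fun j => τ (j + 1)) (t + 1)
    have hcons : {g : Fin (t + 1) → Fin m // IsTwistedPath τ a b g} ≃
        Σ x, {g : Fin t → Fin m // IsTwistedPath τ a b (Fin.cons x g : Fin (t + 1) → Fin m)} :=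
      (Equiv.subtypeEquiv (Fin.consEquiv fun _ => Fin m) fun _ => Iff.rfl).symm.trans
        (Equiv.subtypeProdEquivSigmaSubtype fun x g => IsTwistedPath τ a b (Fin.cons x g))
    have hx (x : Fin m) :
        Nat.card {g : Fin t → Fin m // IsTwistedPath τ a b (Fin.cons x g : Fin (t + 1) → Fin m)} =
          if ρ x = ρ (τ 0 a) then 0 else if ρ x = b then pathSame m (t + 1) else pathDiff m (t + 1) := by
      simp only [EmbeddingLike.apply_eq_iff_eq]
      by_cases h : x = τ 0 a
      · simp [isTwistedPath_cons, h]
      · simp only [isTwistedPath_cons, ne_eq, h, not_false_eq_true, true_and]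
        exact ih _ x
    rw [Nat.card_congr hcons, Nat.card_sigma, Fintype.sum_congr _ _ hx,
      Equiv.sum_comp ρ (fun y => if y = ρ (τ 0 a) then 0 else if y = b then _ else _), sum_ite_eq_zero_ite_eq,
      twistComp_succ (n := t + 1)]
    rfl

lemma exists_perm_of_matching {β : Type*} [Finite β] (R : β → β → Prop)
    (hfun : ∀ a b b', R a b → R a b' → b = b') (hinj : ∀ a a' b, R a b → R a' b → a = a') :
    ∃ e : Equiv.Perm β, ∀ a b, R a b → e a = b := by
  classical
  have := Fintype.ofFinite β
  let f a := if h : ∃ b, R a b then h.choose else a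
  have hf : ∀ a b, R a b → f a = b := fun a b hab => by
    have h : ∃ b, R a b := ⟨b, hab⟩
    simpa [f, h] using hfun a _ _ h.choose_spec hab
  obtain ⟨g, hg⟩ := Set.MapsTo.exists_equiv_extend_of_card_eq (s := {a | ∃ b, R a b})
    (t := univ) (card_univ).symm (fun a _ => mem_univ (f a))
    fun a ⟨b, hab⟩ a' ⟨b', hab'⟩ h => by
      rw [hf a b hab, hf a' b' hab'] at h
      exact hinj a a' b hab (h ▸ hab')
  exact ⟨g.trans (Equiv.subtypeUnivEquiv mem_univ), fun a b hab => (hg a ⟨b, hab⟩).trans (hf a b hab)⟩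

section Cover

open SimpleGraph

variable {V : Type*} (G : SimpleGraph V) (m : ℕ)

lemma isDPCover_boxProd_top : IsDPCover G m (G □ (⊤ : SimpleGraph (Fin m))) where
  listClique v j j' h := boxProd_adj.mpr (.inr ⟨h, rfl⟩)
  cross u v j j' huv h := by
    rcases boxProd_adj.mp h with ⟨h, -⟩ | ⟨-, h⟩
    exacts [h, absurd h huv]
  matching₁ u v j j₁ j₂ huv h₁ h₂ := by
    rcases boxProd_adj.mp h₁ with ⟨-, rfl⟩ | ⟨-, h⟩ <;>
      rcases boxProd_adj.mp h₂ with ⟨-, rfl⟩ | ⟨-, h'⟩ <;> simp_all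
  matching₂ u v j₁ j₂ j huv h₁ h₂ := by
    rcases boxProd_adj.mp h₁ with ⟨-, rfl⟩ | ⟨-, h⟩ <;>
      rcases boxProd_adj.mp h₂ with ⟨-, h₂⟩ | ⟨-, h'⟩ <;> simp_all

lemma coverColorings_boxProd_top :
    coverColorings m (G □ (⊤ : SimpleGraph (Fin m))) = properCount G m := by
  refine Nat.card_congr (Equiv.subtypeEquivRight fun f => ?_)
  simp only [boxProd_adj, top_adj]
  exact ⟨fun h u v huv hf => h u v (.inl ⟨huv, hf⟩),
    fun h u v => by rintro (⟨huv, hf⟩ | ⟨hf, rfl⟩); exacts [h u v huv hf, hf rfl]⟩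

theorem dpColorFunction_eq_properCount_of_le
    (h : ∀ H, IsDPCover G m H → properCount G m ≤ coverColorings m H) :
    dpColorFunction G m = properCount G m := by
  have hmem : properCount G m ∈
      {n | ∃ H, IsDPCover G m H ∧ n = coverColorings m H} :=
    ⟨_, isDPCover_boxProd_top G m, (coverColorings_boxProd_top G m).symm⟩
  refine le_antisymm (Nat.sInf_le hmem) (le_csInf ⟨_, hmem⟩ ?_)
  rintro n ⟨H, hH, rfl⟩
  exact h H hH

end Cover

section Theta

variable {k : ℕ} {l : Fin k → ℕ} {α : Type*} {m : ℕ}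

lemma thetaVert_succ_ne (i : Fin k) {j : ℕ} (hj : j < l i) :
    thetaVert k l i (j + 1) ≠ thetaVert k l i j := by
  unfold thetaVert
  split_ifs <;> simp_all [Fin.ext_iff]
  omega

lemma thetaGraph_adj {x y : ThetaVertexType k l} :
    (thetaGraph k l).Adj x y ↔ ∃ i, ∃ j < l i,
      (x = thetaVert k l i (j + 1) ∧ y = thetaVert k l i j) ∨
        (x = thetaVert k l i j ∧ y = thetaVert k l i (j + 1)) := by
  simp only [thetaGraph, SimpleGraph.fromEdgeSet_adj, Set.mem_ofPred_eq, Sym2.eq_iff]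
  constructor
  · rintro ⟨⟨i, j, hj, h⟩, -⟩
    exact ⟨i, j, hj, h.symm⟩
  · rintro ⟨i, j, hj, h⟩
    refine ⟨⟨i, j, hj, h.symm⟩, ?_⟩
    rcases h with ⟨rfl, rfl⟩ | ⟨rfl, rfl⟩
    exacts [thetaVert_succ_ne i hj, (thetaVert_succ_ne i hj).symm]

lemma apply_thetaVert {i : Fin k} (hl : 1 ≤ l i) (f : ThetaVertexType k l → α)
    (j : ℕ) :
    f (thetaVert k l i j) = pathColor (f (.inl 0)) (f (.inl 1)) (fun s => f (.inr ⟨i, s⟩)) j := by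
  unfold thetaVert pathColor
  split_ifs <;> first | rfl | omega

/-- Colorings of the cover of the theta graph whose cross-edges along the `j`-th edge of path `i`
form the graph of `τ i j`. -/
def IsTwistedColoring (τ : Fin k → ℕ → Equiv.Perm α) (f : ThetaVertexType k l → α) : Prop :=
  ∀ i, ∀ j < l i, f (thetaVert k l i (j + 1)) ≠ τ i j (f (thetaVert k l i j))

lemma isTwistedColoring_iff (hl : ∀ i, 1 ≤ l i) (τ : Fin k → ℕ → Equiv.Perm α)
    (f : ThetaVertexType k l → α) :
    IsTwistedColoring τ f ↔
      ∀ i, IsTwistedPath (τ i) (f (.inl 0)) (f (.inl 1)) (fun s => f (.inr ⟨i, s⟩)) := by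
  refine forall_congr' fun i => ?_
  simp only [IsTwistedPath, apply_thetaVert (hl i)]
  have := hl i
  exact ⟨fun h j hj => h j (by omega), fun h j hj => h j (by omega)⟩

def twistedColoringEquiv (hl : ∀ i, 1 ≤ l i) (τ : Fin k → ℕ → Equiv.Perm α) :
    {f : ThetaVertexType k l → α // IsTwistedColoring τ f} ≃
      Σ ab : α × α, ∀ i, {g : Fin (l i - 1) → α // IsTwistedPath (τ i) ab.1 ab.2 g} where
  toFun f := ⟨(f.1 (.inl 0), f.1 (.inl 1)),
    fun i => ⟨fun s => f.1 (.inr ⟨i, s⟩), (isTwistedColoring_iff hl τ f.1).mp f.2 i⟩⟩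
  invFun x := ⟨Sum.elim ![x.1.1, x.1.2] fun v => (x.2 v.1).1 v.2,
    (isTwistedColoring_iff hl τ _).mpr fun i => (x.2 i).2⟩
  left_inv f := by
    ext (v | ⟨i, s⟩)
    · fin_cases v <;> rfl
    · rfl
  right_inv _ := rfl

theorem card_twistedColorings (hl : ∀ i, 1 ≤ l i) (τ : Fin k → ℕ → Equiv.Perm (Fin m)) :
    Nat.card {f : ThetaVertexType k l → Fin m // IsTwistedColoring τ f} =
      ∑ a, twistedSum (fun i => pathSame m (l i)) (fun i => pathDiff m (l i))
        (fun i => twistComp (τ i) (l i) a) := by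
  rw [Nat.card_congr (twistedColoringEquiv hl τ), Nat.card_sigma, Fintype.sum_prod_type]
  refine sum_congr rfl fun a _ => sum_congr rfl fun b _ => ?_
  rw [Nat.card_pi, classWeight]
  refine prod_congr rfl fun i _ => ?_
  rw [card_isTwistedPath, Nat.sub_add_cancel (hl i)]
  simp

theorem exists_twist_card_le_coverColorings {H : SimpleGraph (ThetaVertexType k l × Fin m)}
    (hH : IsDPCover (thetaGraph k l) m H) :
    ∃ τ : Fin k → ℕ → Equiv.Perm (Fin m),
      Nat.card {f : ThetaVertexType k l → Fin m // IsTwistedColoring τ f} ≤ coverColorings m H := by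
  have hmatch (u v : ThetaVertexType k l) : ∃ e : Equiv.Perm (Fin m),
      ∀ a b, u ≠ v ∧ H.Adj (u, a) (v, b) → e a = b :=
    exists_perm_of_matching _ (fun a _ _ h h' => hH.matching₁ u v a _ _ h.1 h.2 h'.2)
      (fun _ _ b h h' => hH.matching₂ u v _ _ b h.1 h.2 h'.2)
  choose σ hσ using hmatch
  -- `σ u v` only adds cross-edges to `H`, so every twisted coloring is an `H`-coloring.
  refine ⟨fun i j => σ (thetaVert k l i j) (thetaVert k l i (j + 1)), ?_⟩
  refine Nat.card_le_card_of_injective _ (Subtype.impEmbedding _ _ fun f hf u v hadj => ?_).injective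
  have huv : u ≠ v := fun h => H.irrefl (h ▸ hadj)
  obtain ⟨i, j, hj, ⟨rfl, rfl⟩ | ⟨rfl, rfl⟩⟩ := thetaGraph_adj.mp (hH.cross u v _ _ huv hadj)
  · exact hf i j hj (hσ _ _ _ _ ⟨huv.symm, hadj.symm⟩).symm
  · exact hf i j hj (hσ _ _ _ _ ⟨huv, hadj⟩).symm

theorem properCount_thetaGraph :
    properCount (thetaGraph k l) m =
      Nat.card {f : ThetaVertexType k l → Fin m // IsTwistedColoring (fun _ _ => 1) f} := by
  refine Nat.card_congr (Equiv.subtypeEquivRight fun f => ⟨fun hf i j hj => ?_, ?_⟩)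
  · exact hf _ _ (thetaGraph_adj.mpr ⟨i, j, hj, .inl ⟨rfl, rfl⟩⟩)
  · intro hf u v hadj
    obtain ⟨i, j, hj, ⟨rfl, rfl⟩ | ⟨rfl, rfl⟩⟩ := thetaGraph_adj.mp hadj
    · exact hf i j hj
    · exact (hf i j hj).symm

theorem properCount_thetaGraph_le_coverColorings (hl : ∀ i, 1 ≤ l i) {i₀ : Fin k}
    (hflip : SignFlipAt (fun i => pathSame m (l i)) (fun i => pathDiff m (l i)) i₀ ∨
      SignFlipAt (fun i => pathDiff m (l i)) (fun i => pathSame m (l i)) i₀)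
    {H : SimpleGraph (ThetaVertexType k l × Fin m)} (hH : IsDPCover (thetaGraph k l) m H) :
    properCount (thetaGraph k l) m ≤ coverColorings m H := by
  obtain ⟨τ, hτ⟩ := exists_twist_card_le_coverColorings hH
  calc properCount (thetaGraph k l) m
      = ∑ a, twistedSum (fun i => pathSame m (l i)) (fun i => pathDiff m (l i)) fun _ => a := by
        simp [properCount_thetaGraph, card_twistedColorings hl]
    _ ≤ ∑ a, twistedSum (fun i => pathSame m (l i)) (fun i => pathDiff m (l i))
          (fun i => twistComp (τ i) (l i) a) :=
        sum_le_sum fun a _ => twistedSum_const_le _ _ hflip _ a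
    _ = _ := (card_twistedColorings hl τ).symm
    _ ≤ _ := hτ

end Theta

end ThetaDP

/-- Theorem 1.4(ii): if `l 1` has parity different from every `l j` with
`j ≥ 2`, then the DP color function of the generalized theta graph eventually
equals its chromatic polynomial. -/
theorem stmt_17 (k : ℕ) (hk : 2 ≤ k) (l : Fin k → ℕ)
    (h1 : 1 ≤ l ⟨0, by omega⟩)
    (hmono : ∀ i j : Fin k, 1 ≤ i.val → i ≤ j → l i ≤ l j)
    (h2 : max (l ⟨0, by omega⟩) 2 ≤ l ⟨1, by omega⟩)
    (hpar : ∀ j : Fin k, 1 ≤ j.val → l ⟨0, by omega⟩ % 2 ≠ l j % 2) :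
    ∃ N : ℕ, ∀ m : ℕ, N ≤ m →
      dpColorFunction (thetaGraph k l) m = properCount (thetaGraph k l) m := by
  have hpos (j : Fin k) (hj : j ≠ ⟨0, by omega⟩) : 1 ≤ j.val :=
    Nat.one_le_iff_ne_zero.mpr fun h => hj (Fin.ext h)
  have hle (j : Fin k) (hj : j ≠ ⟨0, by omega⟩) : l ⟨1, by omega⟩ ≤ l j :=
    hmono _ j le_rfl (Fin.le_def.mpr (hpos j hj))
  have hl (i : Fin k) : 1 ≤ l i := by
    by_cases hi : i = ⟨0, by omega⟩
    · exact hi ▸ h1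
    · have := hle i hi
      omega
  have hlt (j : Fin k) (hj : j ≠ ⟨0, by omega⟩) : l ⟨0, by omega⟩ < l j := by
    have := hle j hj
    have := hpar j (hpos j hj)
    omega
  refine ⟨2 ^ k + 3, fun m hm => ThetaDP.dpColorFunction_eq_properCount_of_le _ _ fun H hH => ?_⟩
  exact ThetaDP.properCount_thetaGraph_le_coverColorings hl
    (ThetaDP.signFlipAt_pathCounts (by simpa using hm) h1 hlt fun j hj => hpar j (hpos j hj)) hH
end

section
/- Let G = Θ(l₁,l₂,l₃) with 2 ≤ l₁ ≤ l₂ ≤ l₃ all of the same parity. Then for all m ≥ 3, P_DP(G, m) = (1/m)[(m−1)^{l₁+l₂+l₃} − (m−1)^{l₁} − (m−1)^{l₂} − (m−1)^{l₃} + 2(−1)^{l₁+l₂+l₃}]. -/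
/-!
Extending the cross-edge matchings of an `m`-fold cover `H` of `Θ` to permutations `σ i j`,
every colouring `f` with `f v_{j+1} ≠ σ i j (f v_j)` on each edge `v_j v_{j+1}` of path `i` is an
`H`-colouring. Cutting `Θ` at its ends, these colourings number `∑_{a,b} ∏_i N_i(a, b)`, where by
induction along the path `N_i(a, b) = P_i + (-1)^{l_i} [τ_i a = b]`, with `τ_i` the composite of
the permutations of path `i` and `P_i = ((m-1)^{l_i} - (-1)^{l_i}) / m`. When the `l_i` have a
common parity `ε`, expanding the product and summing gives `m (m P₀P₁P₂ + ε (P₁P₂ + P₀P₂ + P₀P₁))`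
plus terms that are nonnegative (as every `P_i ≥ 1`) and vanish when `τ₀ a, τ₁ a, τ₂ a` are
distinct for each `a`. Twisting the first edge of each path by a different rotation of `Fin m`
gives a cover attaining this value, which is therefore `P_DP(Θ, m)`.
-/

open Finset Function

section Path

variable {α : Type*}

def compPerm (σ : ℕ → Equiv.Perm α) : ℕ → Equiv.Perm α
  | 0 => 1
  | n + 1 => σ n * compPerm σ n

lemma compPerm_eq_of_eq_one {σ : ℕ → Equiv.Perm α} (hσ : ∀ j, j ≠ 0 → σ j = 1) :
    ∀ {n : ℕ}, n ≠ 0 → compPerm σ n = σ 0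
  | 1, _ => mul_one _
  | n + 2, _ => by
    rw [compPerm, compPerm_eq_of_eq_one hσ n.succ_ne_zero, hσ _ (by omega), one_mul]

abbrev PathColoring (σ : ℕ → Equiv.Perm α) (n : ℕ) (a b : α) : Type _ :=
  {g : Fin (n + 1) → α // g 0 = a ∧ g (Fin.last n) = b ∧
    ∀ j : Fin n, g j.succ ≠ σ j (g j.castSucc)}

lemma card_pathColoring_zero [DecidableEq α] (σ : ℕ → Equiv.Perm α) (a b : α) :
    Nat.card (PathColoring σ 0 a b) = if a = b then 1 else 0 := by
  split_ifs with hab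
  · subst hab
    refine Nat.card_eq_one_iff_unique.2 ⟨⟨fun g h => Subtype.ext (funext fun i => ?_)⟩,
      ⟨⟨fun _ => a, rfl, rfl, fun j => j.elim0⟩⟩⟩
    rw [Fin.fin_one_eq_zero i, g.2.1, h.2.1]
  · have : IsEmpty (PathColoring σ 0 a b) := ⟨fun g => hab (g.2.1.symm.trans g.2.2.1)⟩
    exact Nat.card_of_isEmpty

def pathColoringSuccEquiv (σ : ℕ → Equiv.Perm α) (n : ℕ) (a b : α) :
    PathColoring σ (n + 1) a b ≃ {p : Σ c, PathColoring σ n a c // σ n p.1 ≠ b} where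
  toFun g := ⟨⟨g.1 (Fin.last n).castSucc, Fin.init g.1, g.2.1, rfl,
      fun j => g.2.2.2 j.castSucc⟩, fun h => g.2.2.2 (Fin.last n) (g.2.2.1.trans h.symm)⟩
  invFun p := ⟨Fin.snoc p.1.2.1 b, by
    refine ⟨?_, Fin.snoc_last _ _, Fin.lastCases ?_ fun j => ?_⟩
    · exact (Fin.snoc_castSucc (α := fun _ => α) b _ 0).trans p.1.2.2.1
    · simpa [p.1.2.2.2.1] using p.2.symm
    · rw [Fin.succ_castSucc, Fin.snoc_castSucc, Fin.snoc_castSucc]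
      exact p.1.2.2.2.2 j⟩
  left_inv g := Subtype.ext <| by
    conv_rhs => rw [← Fin.snoc_init_self g.1, g.2.2.1]
  right_inv p := Subtype.ext <| Sigma.subtype_ext (by simp [p.1.2.2.2.1])
    (Fin.init_snoc (α := fun _ => α) b p.1.2.1)

lemma card_pathColoring_succ [Fintype α] [DecidableEq α] (σ : ℕ → Equiv.Perm α) (n : ℕ)
    (a b : α) :
    Nat.card (PathColoring σ (n + 1) a b) =
      ∑ c ∈ univ.erase ((σ n).symm b), Nat.card (PathColoring σ n a c) := by
  rw [Nat.card_congr ((pathColoringSuccEquiv σ n a b).trans (Equiv.subtypeSigmaEquiv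
    (fun c => PathColoring σ n a c) (fun c => σ n c ≠ b))),
    Nat.card_sigma]
  refine (Finset.sum_subtype _ (p := fun c => σ n c ≠ b) (fun c => ?_)
    fun c => Nat.card (PathColoring σ n a c)).symm
  simp [Equiv.eq_symm_apply]

/-- The number of proper colourings, from `q` colours, of a path with `n` edges whose two ends
have prescribed distinct colours. -/
def pathCount (q : ℚ) (n : ℕ) : ℚ := ((q - 1) ^ n - (-1) ^ n) / q

lemma card_pathColoring [Fintype α] [DecidableEq α] (σ : ℕ → Equiv.Perm α) (n : ℕ) (a b : α) :
    (Nat.card (PathColoring σ n a b) : ℚ) =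
      pathCount (Fintype.card α) n + (-1) ^ n * if compPerm σ n a = b then 1 else 0 := by
  have hq : (Fintype.card α : ℚ) ≠ 0 := by
    have : Nonempty α := ⟨a⟩
    positivity
  induction n generalizing b with
  | zero =>
    rw [card_pathColoring_zero]
    split_ifs <;> simp_all [pathCount, compPerm]
  | succ n ih =>
    rw [card_pathColoring_succ, Nat.cast_sum, Finset.sum_erase_eq_sub (mem_univ _)]
    simp only [ih, sum_add_distrib, ← mul_sum, sum_ite_eq, mem_univ, if_true, sum_const,
      card_univ, nsmul_eq_mul, Equiv.eq_symm_apply]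
    rw [compPerm, Equiv.Perm.mul_apply]
    unfold pathCount
    field_simp
    ring

end Path

section ThetaGraph

variable {k : ℕ} {l : Fin k → ℕ}

lemma thetaVert_self (i : Fin k) (hi : l i ≠ 0) : thetaVert k l i (l i) = Sum.inl 1 := by
  simp [thetaVert, hi]

lemma thetaVert_succ (i : Fin k) (t : Fin (l i - 1)) :
    thetaVert k l i (t + 1) = Sum.inr ⟨i, t⟩ := by
  simp only [thetaVert, Nat.add_one_ne_zero, dite_false, Nat.add_sub_cancel]
  rw [dif_pos (by omega)]

lemma inr_sigma_eq_iff {i i' : Fin k} {j j'} (hj : j - 1 < l i - 1) (hj' : j' - 1 < l i' - 1) :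
    (Sum.inr ⟨i, ⟨j - 1, hj⟩⟩ : ThetaVertexType k l) = Sum.inr ⟨i', ⟨j' - 1, hj'⟩⟩ ↔
      i = i' ∧ j - 1 = j' - 1 := by
  constructor
  · intro h
    obtain ⟨rfl, h⟩ := Sigma.mk.inj_iff.1 (Sum.inr.inj h)
    exact ⟨rfl, Fin.mk.inj_iff.1 (eq_of_heq h)⟩
  · rintro ⟨rfl, h⟩
    simp [h]

lemma thetaVert_edge_eq (hl : ∀ i, 2 ≤ l i) {i i' : Fin k} {j j' : ℕ} (hj : j < l i)
    (hj' : j' < l i') (h₀ : thetaVert k l i j = thetaVert k l i' j')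
    (h₁ : thetaVert k l i (j + 1) = thetaVert k l i' (j' + 1)) : i = i' ∧ j = j' := by
  have := hl i; have := hl i'
  unfold thetaVert at h₀ h₁
  split_ifs at h₀ h₁ <;> simp only [inr_sigma_eq_iff] at h₀ h₁
  all_goals first
    | contradiction
    | obtain ⟨rfl, _⟩ := h₀; exact ⟨rfl, by omega⟩
    | obtain ⟨rfl, _⟩ := h₁; exact ⟨rfl, by omega⟩
    | omega

lemma thetaVert_edge_ne_swap (hl : ∀ i, 2 ≤ l i) {i i' : Fin k} {j j' : ℕ} (hj : j < l i)
    (hj' : j' < l i') (h₀ : thetaVert k l i j = thetaVert k l i' (j' + 1))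
    (h₁ : thetaVert k l i (j + 1) = thetaVert k l i' j') : False := by
  have := hl i; have := hl i'
  unfold thetaVert at h₀ h₁
  split_ifs at h₀ h₁ <;> simp only [inr_sigma_eq_iff, Sum.inl.injEq] at h₀ h₁
  all_goals first
    | contradiction
    | obtain ⟨rfl, _⟩ := h₀; omega

lemma thetaVert_ne_succ (i : Fin k) {j : ℕ} (hj : j < l i) :
    thetaVert k l i j ≠ thetaVert k l i (j + 1) := by
  unfold thetaVert
  split_ifs <;> simp <;> omega

lemma thetaGraph_adj {u v : ThetaVertexType k l} :
    (thetaGraph k l).Adj u v ↔ ∃ i, ∃ j < l i,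
      (u = thetaVert k l i j ∧ v = thetaVert k l i (j + 1)) ∨
        (u = thetaVert k l i (j + 1) ∧ v = thetaVert k l i j) := by
  simp only [thetaGraph, SimpleGraph.fromEdgeSet_adj, Set.mem_ofPred_eq, Sym2.eq_iff]
  constructor
  · rintro ⟨⟨i, j, hj, h⟩, -⟩
    exact ⟨i, j, hj, h⟩
  · rintro ⟨i, j, hj, h⟩
    refine ⟨⟨i, j, hj, h⟩, ?_⟩
    rcases h with ⟨rfl, rfl⟩ | ⟨rfl, rfl⟩
    exacts [thetaVert_ne_succ i hj, (thetaVert_ne_succ i hj).symm]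

end ThetaGraph

section ThetaColoring

variable {α : Type*} {k : ℕ} {l : Fin k → ℕ}

variable (l) in
abbrev ThetaColoring (σ : Fin k → ℕ → Equiv.Perm α) : Type _ :=
  {f : ThetaVertexType k l → α //
    ∀ i, ∀ j < l i, f (thetaVert k l i (j + 1)) ≠ σ i j (f (thetaVert k l i j))}

def thetaGlue (a b : α) (g : ∀ i, Fin (l i + 1) → α) : ThetaVertexType k l → α
  | Sum.inl c => ![a, b] c
  | Sum.inr ⟨i, t⟩ => g i ⟨t + 1, by omega⟩

lemma thetaGlue_thetaVert {a b : α} {g : ∀ i, Fin (l i + 1) → α} (ha : ∀ i, g i 0 = a)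
    (hb : ∀ i, g i (Fin.last _) = b) (i : Fin k) (j : Fin (l i + 1)) :
    thetaGlue a b g (thetaVert k l i j) = g i j := by
  obtain ⟨j, hj⟩ := j
  rcases Nat.eq_zero_or_pos j with rfl | hj0
  · exact (ha i).symm
  rcases Nat.lt_or_ge j (l i) with hjl | hjl
  · obtain ⟨t, rfl⟩ : ∃ t, j = t + 1 := ⟨j - 1, by omega⟩
    rw [thetaVert_succ i ⟨t, by omega⟩]
    rfl
  · obtain rfl : j = l i := by omega
    rw [thetaVert_self i (by omega)]
    exact (hb i).symm

lemma thetaGlue_self (f : ThetaVertexType k l → α) :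
    thetaGlue (f (Sum.inl 0)) (f (Sum.inl 1)) (fun i j => f (thetaVert k l i j)) = f := by
  funext v
  rcases v with c | ⟨i, t⟩
  · fin_cases c <;> rfl
  · exact congrArg f (thetaVert_succ i t)

def thetaColoringEquiv (hl : ∀ i, l i ≠ 0) (σ : Fin k → ℕ → Equiv.Perm α) :
    ThetaColoring l σ ≃ Σ p : α × α, ∀ i, PathColoring (σ i) (l i) p.1 p.2 where
  toFun f := ⟨(f.1 (Sum.inl 0), f.1 (Sum.inl 1)), fun i =>
    ⟨fun j => f.1 (thetaVert k l i j), rfl, congrArg f.1 (thetaVert_self i (hl i)),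
      fun j => f.2 i j j.2⟩⟩
  invFun x := ⟨thetaGlue x.1.1 x.1.2 fun i => (x.2 i).1, fun i j hj => by
    have h := thetaGlue_thetaVert (fun i => (x.2 i).2.1) (fun i => (x.2 i).2.2.1) i
    rw [h ⟨j + 1, by omega⟩, h ⟨j, by omega⟩]
    exact (x.2 i).2.2.2 ⟨j, hj⟩⟩
  left_inv f := Subtype.ext (thetaGlue_self f.1)
  right_inv x := Sigma.ext rfl <| heq_of_eq <| funext fun i => Subtype.ext <| funext <|
    thetaGlue_thetaVert (fun i => (x.2 i).2.1) (fun i => (x.2 i).2.2.1) i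

lemma card_thetaColoring [Fintype α] (hl : ∀ i, l i ≠ 0) (σ : Fin k → ℕ → Equiv.Perm α) :
    Nat.card (ThetaColoring l σ) =
      ∑ a, ∑ b, ∏ i, Nat.card (PathColoring (σ i) (l i) a b) := by
  rw [Nat.card_congr (thetaColoringEquiv hl σ), Nat.card_sigma, Fintype.sum_prod_type]
  simp only [Nat.card_pi]

lemma cast_card_thetaColoring [Fintype α] [DecidableEq α]
    (hl : ∀ i, l i ≠ 0) (σ : Fin k → ℕ → Equiv.Perm α) :
    (Nat.card (ThetaColoring l σ) : ℚ) = ∑ a, ∑ b, ∏ i, (pathCount (Fintype.card α) (l i) +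
      (-1) ^ l i * if compPerm (σ i) (l i) a = b then 1 else 0) := by
  rw [card_thetaColoring hl]
  push_cast
  simp only [card_pathColoring]

end ThetaColoring

section Cover

variable {k m : ℕ} {l : Fin k → ℕ}

lemma exists_perm_eqOn {α : Type*} [Fintype α] {s : Set α} {f : α → α} (hf : Set.InjOn f s) :
    ∃ e : Equiv.Perm α, Set.EqOn e f s := by
  obtain ⟨g, hg⟩ := Set.MapsTo.exists_equiv_extend_of_card_eq (t := univ) (by simp)
    (fun x _ => mem_coe.2 (mem_univ (f x))) hf
  exact ⟨g.trans (Equiv.subtypeUnivEquiv mem_univ), fun x hx => hg x hx⟩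

lemma IsDPCover.exists_perm {V : Type*} {G : SimpleGraph V} {H : SimpleGraph (V × Fin m)}
    (hH : IsDPCover G m H) {u v : V} (huv : u ≠ v) :
    ∃ e : Equiv.Perm (Fin m), ∀ c c', H.Adj (u, c) (v, c') → e c = c' := by
  choose! f hf using fun c (h : ∃ c', H.Adj (u, c) (v, c')) => h
  obtain ⟨e, he⟩ := exists_perm_eqOn (s := {c | ∃ c', H.Adj (u, c) (v, c')}) (f := f)
    fun c₁ h₁ c₂ h₂ h => hH.matching₂ u v c₁ c₂ _ huv (hf c₁ h₁) (h ▸ hf c₂ h₂)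
  exact ⟨e, fun c c' hc => (he ⟨c', hc⟩).trans (hH.matching₁ u v c _ _ huv (hf c ⟨c', hc⟩) hc)⟩

lemma IsDPCover.exists_card_thetaColoring_le {H : SimpleGraph (ThetaVertexType k l × Fin m)}
    (hH : IsDPCover (thetaGraph k l) m H) :
    ∃ σ : Fin k → ℕ → Equiv.Perm (Fin m), Nat.card (ThetaColoring l σ) ≤ coverColorings m H := by
  have : ∀ i j, ∃ e : Equiv.Perm (Fin m), j < l i → ∀ c c',
      H.Adj (thetaVert k l i j, c) (thetaVert k l i (j + 1), c') → e c = c' := fun i j =>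
    if hj : j < l i then (hH.exists_perm (thetaVert_ne_succ i hj)).imp fun _ he _ => he
    else ⟨1, fun h => absurd h hj⟩
  choose σ hσ using this
  have hindep (f : ThetaColoring l σ) (u v) : ¬ H.Adj (u, f.1 u) (v, f.1 v) := by
    intro hadj
    by_cases huv : u = v
    · subst huv
      exact H.irrefl hadj
    obtain ⟨i, j, hj, ⟨rfl, rfl⟩ | ⟨rfl, rfl⟩⟩ := thetaGraph_adj.1 (hH.cross _ _ _ _ huv hadj)
    · exact f.2 i j hj (hσ i j hj _ _ hadj).symm
    · exact f.2 i j hj (hσ i j hj _ _ hadj.symm).symm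
  exact ⟨σ, Nat.card_le_card_of_injective (fun f => ⟨f.1, hindep f⟩)
    fun f g h => Subtype.ext (congrArg (fun f => f.1) h)⟩

variable (l) in
def permCover (σ : Fin k → ℕ → Equiv.Perm (Fin m)) :
    SimpleGraph (ThetaVertexType k l × Fin m) :=
  SimpleGraph.fromRel fun p q => p.1 = q.1 ∨ ∃ i, ∃ j < l i,
    p.1 = thetaVert k l i j ∧ q.1 = thetaVert k l i (j + 1) ∧ q.2 = σ i j p.2

lemma coverColorings_permCover (σ : Fin k → ℕ → Equiv.Perm (Fin m)) :
    coverColorings m (permCover l σ) = Nat.card (ThetaColoring l σ) := by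
  refine Nat.card_congr (Equiv.subtypeEquivRight fun f => ⟨fun h i j hj he => ?_, ?_⟩)
  · exact h _ _ ((SimpleGraph.fromRel_adj _ _ _).2 ⟨fun h => thetaVert_ne_succ i hj
      (congrArg Prod.fst h), Or.inl (Or.inr ⟨i, j, hj, rfl, rfl, he⟩)⟩)
  · rintro h u v hadj
    obtain ⟨hne, ⟨huv | ⟨i, j, hj, rfl, rfl, he⟩⟩ | ⟨huv | ⟨i, j, hj, rfl, rfl, he⟩⟩⟩ :=
      (SimpleGraph.fromRel_adj _ _ _).1 hadj
    · exact hne (by simp_all)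
    · exact h i j hj he
    · exact hne (by simp_all)
    · exact h i j hj he

lemma permCover_cross {σ : Fin k → ℕ → Equiv.Perm (Fin m)} {u v : ThetaVertexType k l}
    {c c' : Fin m} (huv : u ≠ v) (hadj : (permCover l σ).Adj (u, c) (v, c')) :
    (thetaGraph k l).Adj u v := by
  obtain ⟨-, ⟨huv' | ⟨i, j, hj, hu, hv, -⟩⟩ | ⟨huv' | ⟨i, j, hj, hv, hu, -⟩⟩⟩ :=
    (SimpleGraph.fromRel_adj _ _ _).1 hadj
  · exact absurd huv' huv
  · exact thetaGraph_adj.2 ⟨i, j, hj, Or.inl ⟨hu, hv⟩⟩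
  · exact absurd huv'.symm huv
  · exact thetaGraph_adj.2 ⟨i, j, hj, Or.inr ⟨hu, hv⟩⟩

lemma permCover_adj_thetaVert_iff (hl : ∀ i, 2 ≤ l i) {σ : Fin k → ℕ → Equiv.Perm (Fin m)}
    {i : Fin k} {j : ℕ} (hj : j < l i) {c c' : Fin m} :
    (permCover l σ).Adj (thetaVert k l i j, c) (thetaVert k l i (j + 1), c') ↔ c' = σ i j c := by
  refine ⟨fun hadj => ?_, fun he => (SimpleGraph.fromRel_adj _ _ _).2
    ⟨fun h => thetaVert_ne_succ i hj (congrArg Prod.fst h),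
      Or.inl (Or.inr ⟨i, j, hj, rfl, rfl, he⟩)⟩⟩
  obtain ⟨-, ⟨h | ⟨i', j', hj', h₀, h₁, he⟩⟩ | ⟨h | ⟨i', j', hj', h₀, h₁, -⟩⟩⟩ :=
    (SimpleGraph.fromRel_adj _ _ _).1 hadj
  · exact absurd h (thetaVert_ne_succ i hj)
  · obtain ⟨rfl, rfl⟩ := thetaVert_edge_eq hl hj hj' h₀ h₁
    exact he
  · exact absurd h.symm (thetaVert_ne_succ i hj)
  · exact (thetaVert_edge_ne_swap hl hj hj' h₁ h₀).elim

lemma permCover_matching (hl : ∀ i, 2 ≤ l i) {σ : Fin k → ℕ → Equiv.Perm (Fin m)}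
    {u v : ThetaVertexType k l} {c c₁ c₂ : Fin m} (huv : u ≠ v)
    (h₁ : (permCover l σ).Adj (u, c) (v, c₁)) (h₂ : (permCover l σ).Adj (u, c) (v, c₂)) :
    c₁ = c₂ := by
  obtain ⟨i, j, hj, ⟨rfl, rfl⟩ | ⟨rfl, rfl⟩⟩ := thetaGraph_adj.1 (permCover_cross huv h₁)
  · rw [permCover_adj_thetaVert_iff hl hj] at h₁ h₂
    exact h₁.trans h₂.symm
  · rw [SimpleGraph.adj_comm, permCover_adj_thetaVert_iff hl hj] at h₁ h₂
    exact (σ i j).injective (h₁.symm.trans h₂)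

lemma isDPCover_permCover (hl : ∀ i, 2 ≤ l i) (σ : Fin k → ℕ → Equiv.Perm (Fin m)) :
    IsDPCover (thetaGraph k l) m (permCover l σ) where
  listClique v c c' hcc' := (SimpleGraph.fromRel_adj _ _ _).2 ⟨by simpa, Or.inl (Or.inl rfl)⟩
  cross _ _ _ _ huv := permCover_cross huv
  matching₁ _ _ _ _ _ huv := permCover_matching hl huv
  matching₂ _ _ _ _ _ huv h₁ h₂ := permCover_matching hl huv.symm h₁.symm h₂.symm

end Cover

lemma dpColorFunction_eq_of_forall_le {V : Type*} {G : SimpleGraph V} {m : ℕ}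
    {H₀ : SimpleGraph (V × Fin m)} (h₀ : IsDPCover G m H₀)
    (hle : ∀ H, IsDPCover G m H → coverColorings m H₀ ≤ coverColorings m H) :
    dpColorFunction G m = coverColorings m H₀ :=
  IsLeast.csInf_eq ⟨⟨H₀, h₀, rfl⟩, by rintro _ ⟨H, hH, rfl⟩; exact hle H hH⟩

section Algebra

variable {α : Type*} [DecidableEq α] (P : Fin 3 → ℚ) (ε : ℚ) (x : Fin 3 → α)

lemma sum_indicator_expansion [Fintype α] :
    ∑ b, (P 0 * P 1 * P 2 + ε * ((if x 0 = b then P 1 * P 2 else 0) +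
      (if x 1 = b then P 0 * P 2 else 0) + (if x 2 = b then P 0 * P 1 else 0))) =
      Fintype.card α * (P 0 * P 1 * P 2) + ε * (P 1 * P 2 + P 0 * P 2 + P 0 * P 1) := by
  simp [sum_add_distrib, ← mul_sum]

lemma le_prod_add_indicator (hP : ∀ i, 1 ≤ P i) (hε : ε = 1 ∨ ε = -1) (b : α) :
    P 0 * P 1 * P 2 + ε * ((if x 0 = b then P 1 * P 2 else 0) +
      (if x 1 = b then P 0 * P 2 else 0) + (if x 2 = b then P 0 * P 1 else 0)) ≤
      ∏ i, (P i + ε * if x i = b then 1 else 0) := by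
  have := hP 0; have := hP 1; have := hP 2
  rw [Fin.prod_univ_three]
  rcases hε with rfl | rfl <;> split_ifs <;> nlinarith

lemma prod_add_indicator_of_injective (hx : Injective x) (b : α) :
    ∏ i, (P i + ε * if x i = b then 1 else 0) =
      P 0 * P 1 * P 2 + ε * ((if x 0 = b then P 1 * P 2 else 0) +
        (if x 1 = b then P 0 * P 2 else 0) + (if x 2 = b then P 0 * P 1 else 0)) := by
  rw [Fin.prod_univ_three]
  have hb (i j : Fin 3) (hi : x i = b) (hj : x j = b) : i = j := hx (hi.trans hj.symm)
  split_ifs <;> first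
    | ring1
    | exact absurd (hb 0 1 ‹_› ‹_›) (by decide)
    | exact absurd (hb 0 2 ‹_› ‹_›) (by decide)
    | exact absurd (hb 1 2 ‹_› ‹_›) (by decide)

end Algebra

/-- The value of `∑ a, ∑ b, ∏ i, (P i + ε * [x a i = b])` over `q` colours when every `x a` is
injective. -/
def thetaDPValue (q ε : ℚ) (P : Fin 3 → ℚ) : ℚ :=
  q * (q * (P 0 * P 1 * P 2) + ε * (P 1 * P 2 + P 0 * P 2 + P 0 * P 1))

lemma thetaDPValue_le_sum {α : Type*} [Fintype α] [DecidableEq α] {P : Fin 3 → ℚ} {ε : ℚ}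
    (hP : ∀ i, 1 ≤ P i) (hε : ε = 1 ∨ ε = -1)
    (x : α → Fin 3 → α) :
    thetaDPValue (Fintype.card α) ε P ≤ ∑ a, ∑ b, ∏ i, (P i + ε * if x a i = b then 1 else 0) := by
  rw [thetaDPValue, ← nsmul_eq_mul, ← card_univ, ← sum_const]
  exact sum_le_sum fun a _ => (sum_indicator_expansion P ε (x a)).symm.le.trans
    (sum_le_sum fun b _ => le_prod_add_indicator P ε (x a) hP hε b)

lemma sum_eq_thetaDPValue {α : Type*} [Fintype α] [DecidableEq α] (P : Fin 3 → ℚ) (ε : ℚ)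
    (x : α → Fin 3 → α) (hx : ∀ a, Injective (x a)) :
    ∑ a, ∑ b, ∏ i, (P i + ε * if x a i = b then 1 else 0) = thetaDPValue (Fintype.card α) ε P := by
  rw [thetaDPValue, ← nsmul_eq_mul, ← card_univ, ← sum_const]
  exact sum_congr rfl fun a _ => (sum_congr rfl fun b _ =>
    prod_add_indicator_of_injective P ε (x a) (hx a) b).trans (sum_indicator_expansion P ε (x a))

lemma one_le_pathCount {q : ℚ} (hq : 3 ≤ q) {n : ℕ} (hn : 2 ≤ n) : 1 ≤ pathCount q n := by
  have hsq : (q - 1) ^ 2 ≤ (q - 1) ^ n := pow_le_pow_right₀ (by linarith) hn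
  have hsign : (-1 : ℚ) ^ n ≤ 1 := by
    rcases neg_one_pow_eq_or ℚ n with h | h <;> simp [h]
  rw [pathCount, le_div_iff₀ (by linarith)]
  nlinarith

lemma exists_perm_pointwise_injective {k m : ℕ} (hkm : k ≤ m) :
    ∃ τ : Fin k → Equiv.Perm (Fin m), ∀ a, Injective fun i => τ i a := by
  cases m with
  | zero => exact ⟨1, fun a => a.elim0⟩
  | succ n =>
    refine ⟨fun i => Equiv.addLeft (Fin.castLE hkm i), fun a i i' h => ?_⟩
    exact Fin.castLE_injective hkm (add_right_cancel (b := a) h)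

section ThetaThree

variable {α : Type*} [Fintype α] [DecidableEq α] {l : Fin 3 → ℕ} {ε : ℚ}

lemma thetaDPValue_le_card_thetaColoring (hl : ∀ i, 2 ≤ l i) (hε : ∀ i, (-1 : ℚ) ^ l i = ε)
    (hα : 3 ≤ Fintype.card α) (σ : Fin 3 → ℕ → Equiv.Perm α) :
    thetaDPValue (Fintype.card α) ε (fun i => pathCount (Fintype.card α) (l i)) ≤
      Nat.card (ThetaColoring l σ) := by
  have hP (i : Fin 3) : 1 ≤ pathCount (Fintype.card α) (l i) :=
    one_le_pathCount (by exact_mod_cast hα) (hl i)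
  rw [cast_card_thetaColoring (fun i => by have := hl i; omega)]
  simp only [hε]
  exact thetaDPValue_le_sum hP (hε 0 ▸ neg_one_pow_eq_or ℚ (l 0))
    fun a i => compPerm (σ i) (l i) a

lemma card_thetaColoring_eq_thetaDPValue (hl : ∀ i, l i ≠ 0) (hε : ∀ i, (-1 : ℚ) ^ l i = ε)
    (σ : Fin 3 → ℕ → Equiv.Perm α) (hσ : ∀ a, Injective fun i => compPerm (σ i) (l i) a) :
    (Nat.card (ThetaColoring l σ) : ℚ) =
      thetaDPValue (Fintype.card α) ε (fun i => pathCount (Fintype.card α) (l i)) := by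
  rw [cast_card_thetaColoring hl]
  simp only [hε]
  exact sum_eq_thetaDPValue _ ε _ hσ

end ThetaThree

lemma dpColorFunction_thetaGraph_three {l : Fin 3 → ℕ} (hl : ∀ i, 2 ≤ l i) {ε : ℚ}
    (hε : ∀ i, (-1 : ℚ) ^ l i = ε) {m : ℕ} (hm : 3 ≤ m) :
    (dpColorFunction (thetaGraph 3 l) m : ℚ) = thetaDPValue m ε fun i => pathCount m (l i) := by
  have hl₀ (i : Fin 3) : l i ≠ 0 := by have := hl i; omega
  obtain ⟨τ, hτ⟩ := exists_perm_pointwise_injective hm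
  set σ₀ : Fin 3 → ℕ → Equiv.Perm (Fin m) := fun i j => if j = 0 then τ i else 1
  have hcomp (i : Fin 3) : compPerm (σ₀ i) (l i) = τ i :=
    compPerm_eq_of_eq_one (fun j hj => if_neg hj) (hl₀ i)
  have hσ₀ : ∀ a, Injective fun i => compPerm (σ₀ i) (l i) a := by
    simpa only [hcomp] using hτ
  have hvalue := card_thetaColoring_eq_thetaDPValue hl₀ hε σ₀ hσ₀
  rw [Fintype.card_fin] at hvalue
  rw [dpColorFunction_eq_of_forall_le (isDPCover_permCover hl σ₀), coverColorings_permCover,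
    hvalue]
  intro H hH
  obtain ⟨σ, hσ⟩ := hH.exists_card_thetaColoring_le
  refine le_trans ?_ hσ
  rw [coverColorings_permCover, ← Nat.cast_le (α := ℚ), hvalue]
  simpa using thetaDPValue_le_card_thetaColoring hl hε (by simpa using hm) σ

lemma thetaDPValue_pathCount {q : ℚ} (hq : q ≠ 0) {l : Fin 3 → ℕ} {ε : ℚ}
    (hε : ∀ i, (-1 : ℚ) ^ l i = ε) :
    thetaDPValue q ε (fun i => pathCount q (l i)) =
      1 / q * ((q - 1) ^ (l 0 + l 1 + l 2) - (q - 1) ^ l 0 - (q - 1) ^ l 1 - (q - 1) ^ l 2 +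
        2 * (-1) ^ (l 0 + l 1 + l 2)) := by
  have hε₁ : ε = 1 ∨ ε = -1 := hε 0 ▸ neg_one_pow_eq_or ℚ (l 0)
  simp only [thetaDPValue, pathCount, pow_add, hε]
  rcases hε₁ with rfl | rfl <;> field_simp <;> ring

/-- Theorem 1.3(iv): the DP color function of the theta graph with all three
path lengths of the same parity. -/
theorem stmt_19 (l₁ l₂ l₃ : ℕ) (h1 : 2 ≤ l₁) (h12 : l₁ ≤ l₂) (h23 : l₂ ≤ l₃)
    (hp12 : l₁ % 2 = l₂ % 2) (hp23 : l₂ % 2 = l₃ % 2)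
    (m : ℕ) (hm : 3 ≤ m) :
    (dpColorFunction (thetaGraph 3 ![l₁, l₂, l₃]) m : ℚ) =
      (1 / (m : ℚ)) *
        (((m : ℚ) - 1) ^ (l₁ + l₂ + l₃) - ((m : ℚ) - 1) ^ l₁ - ((m : ℚ) - 1) ^ l₂ -
          ((m : ℚ) - 1) ^ l₃ + 2 * (-1 : ℚ) ^ (l₁ + l₂ + l₃)) := by
  have hl : ∀ i, 2 ≤ ![l₁, l₂, l₃] i := by
    intro i; fin_cases i <;> simp <;> omega
  have hε : ∀ i, (-1 : ℚ) ^ ![l₁, l₂, l₃] i = (-1) ^ l₁ := by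
    intro i
    refine neg_one_pow_congr ?_
    fin_cases i <;> simp [Nat.even_iff] <;> omega
  rw [dpColorFunction_thetaGraph_three hl hε hm, thetaDPValue_pathCount (by positivity) hε]
  rfl
end
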